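/- arXiv:2002.08536 — 6 statements merged into one kernel-verified Lean document; each statement's English description precedes it below -/
import Mathlib

section
/- The Inverse Probability Weighting score is unbiased for the policy value: E_{H∼π_b}[Σ_{t=0}^T γ^t ρ_t^{π_e}(H_t^{s,a}) R_t] = V^{π_e}. -/
open MeasureTheory

noncomputable section

/-- `π(·|s)` is a probability distribution over actions for each state `s`. -/
def IsPolicy {S A : Type} [Fintype A] (π : S → A → ℝ) : Prop :=
  ∀ s, (∀ a, 0 ≤ π s a) ∧ ∑ a, π s a = 1

/-- `PS0` is a probability distribution on the state space. -/
def IsInitDist {S : Type} [Fintype S] (PS0 : S → ℝ) : Prop :=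
  (∀ s, 0 ≤ PS0 s) ∧ ∑ s, PS0 s = 1

/-- `PS(·|s,a)` is a probability distribution on next states for each `(s,a)`. -/
def IsTransKernel {S A : Type} [Fintype S] (PS : S → A → S → ℝ) : Prop :=
  ∀ s a, (∀ s', 0 ≤ PS s a s') ∧ ∑ s', PS s a s' = 1

/-- Probability `P^π(h_n^{s,a})` of the state-action trajectory
`(s 0, a 0, ..., s n, a n)` under policy `π`:
`PS0(s₀) π(a₀|s₀) ∏_{t=1}^{n} P_S(s_t|s_{t-1},a_{t-1}) π(a_t|s_t)`. -/
def trajProb {S A : Type} (n : ℕ) (PS0 : S → ℝ) (PS : S → A → S → ℝ)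
    (π : S → A → ℝ) (s : Fin (n + 1) → S) (a : Fin (n + 1) → A) : ℝ :=
  PS0 (s 0) * π (s 0) (a 0) *
    ∏ t : Fin n, PS (s t.castSucc) (a t.castSucc) (s t.succ) * π (s t.succ) (a t.succ)

/-- Expectation `E_{H∼π}[f(S₀..S_T, A₀..A_T, R₀..R_T)]` over trajectories generated by `π`:
the states and actions follow the Markov dynamics and the rewards `R_t` are drawn
independently from `P_R(·|S_t,A_t)` given the state-action trajectory. -/
def trajExp {S A : Type} [Fintype S] [Fintype A] (T : ℕ)
    (PS0 : S → ℝ) (PS : S → A → S → ℝ) (PR : S → A → Measure ℝ)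
    [∀ s a, IsProbabilityMeasure (PR s a)] (π : S → A → ℝ)
    (f : (Fin (T + 1) → S) → (Fin (T + 1) → A) → (Fin (T + 1) → ℝ) → ℝ) : ℝ :=
  ∑ s : Fin (T + 1) → S, ∑ a : Fin (T + 1) → A,
    trajProb T PS0 PS π s a *
      ∫ r : Fin (T + 1) → ℝ, f s a r ∂(Measure.pi fun t => PR (s t) (a t))

/-- Expectation `E_{H∼π}[g(S₀..S_T, A₀..A_T)]` over state-action trajectories generated
by `π` (reward-free version). -/
def trajExpSA {S A : Type} [Fintype S] [Fintype A] (T : ℕ)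
    (PS0 : S → ℝ) (PS : S → A → S → ℝ) (π : S → A → ℝ)
    (g : (Fin (T + 1) → S) → (Fin (T + 1) → A) → ℝ) : ℝ :=
  ∑ s : Fin (T + 1) → S, ∑ a : Fin (T + 1) → A, trajProb T PS0 PS π s a * g s a

/-- Importance weight `ρ_t^{πe}(h_t^{s,a}; πb) = ∏_{t'=0}^{t} πe(a_{t'}|s_{t'}) / πb(a_{t'}|s_{t'})`. -/
def rhoLE {S A : Type} {T : ℕ} (πe πb : S → A → ℝ) (t : Fin (T + 1))
    (s : Fin (T + 1) → S) (a : Fin (T + 1) → A) : ℝ :=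
  ∏ t' ∈ Finset.Iic t, πe (s t') (a t') / πb (s t') (a t')

/-- Importance weight `ρ_{t-1}^{πe}(h_{t-1}^{s,a}; πb) = ∏_{t' < t} πe(a_{t'}|s_{t'}) / πb(a_{t'}|s_{t'})`,
with the convention `ρ_{-1}^{πe} = 1` (empty product when `t = 0`). -/
def rhoLT {S A : Type} {T : ℕ} (πe πb : S → A → ℝ) (t : Fin (T + 1))
    (s : Fin (T + 1) → S) (a : Fin (T + 1) → A) : ℝ :=
  ∏ t' ∈ Finset.Iio t, πe (s t') (a t') / πb (s t') (a t')

/-- The doubly robust score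
`ψ(H; π̃b, {q̃_t}) = ∑_t γ^t {ρ_t(R_t − q̃_t(S_t,A_t)) + ρ_{t-1} ∑_a πe(a|S_t) q̃_t(S_t,a)}`. -/
def psiDR {S A : Type} [Fintype A] {T : ℕ} (πe πtb : S → A → ℝ) (γ : ℝ)
    (q : Fin (T + 1) → S → A → ℝ)
    (s : Fin (T + 1) → S) (a : Fin (T + 1) → A) (r : Fin (T + 1) → ℝ) : ℝ :=
  ∑ t : Fin (T + 1), γ ^ (t : ℕ) *
    (rhoLE πe πtb t s a * (r t - q t (s t) (a t))
      + rhoLT πe πtb t s a * ∑ a' : A, πe (s t) a' * q t (s t) a')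

/-- Value functions by backward recursion, indexed by the number of remaining steps. -/
def qAux {S A : Type} [Fintype S] [Fintype A] (μ : S → A → ℝ) (PS : S → A → S → ℝ)
    (πe : S → A → ℝ) (γ : ℝ) : ℕ → S → A → ℝ
  | 0 => μ
  | (k + 1) => fun s a =>
      μ s a + γ * ∑ s', ∑ a', PS s a s' * πe s' a' * qAux μ PS πe γ k s' a'

/-- The state-action value function `q_t^{πe}` defined by the backward recursion
`q_T = μ`, `q_t(s,a) = μ(s,a) + γ ∑_{(s',a')} P_S(s'|s,a) πe(a'|s') q_{t+1}(s',a')`. -/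
def qRec {S A : Type} [Fintype S] [Fintype A] (T : ℕ) (μ : S → A → ℝ)
    (PS : S → A → S → ℝ) (πe : S → A → ℝ) (γ : ℝ) (t : Fin (T + 1)) : S → A → ℝ :=
  qAux μ PS πe γ (T - t)

/-- `Pr_{H∼π}(S_t = s0, A_t = a0)`. -/
def occProb {S A : Type} [Fintype S] [Fintype A] [DecidableEq S] [DecidableEq A]
    (T : ℕ) (PS0 : S → ℝ) (PS : S → A → S → ℝ) (PR : S → A → Measure ℝ)
    [∀ s a, IsProbabilityMeasure (PR s a)] (π : S → A → ℝ)
    (t : Fin (T + 1)) (s0 : S) (a0 : A) : ℝ :=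
  trajExp T PS0 PS PR π (fun s a _ => if s t = s0 ∧ a t = a0 then 1 else 0)

/-- `q_t^{π}(s0,a0) = E_{H∼π}[∑_{t'=t}^{T} γ^{t'-t} R_{t'} ∣ S_t = s0, A_t = a0]`,
written as the ratio `E[1{S_t=s0,A_t=a0} ∑_{t'≥t} γ^{t'-t} R_{t'}] / Pr(S_t=s0,A_t=a0)`
(with the junk value `0` when the conditioning event has probability zero). -/
def qCond {S A : Type} [Fintype S] [Fintype A] [DecidableEq S] [DecidableEq A]
    (T : ℕ) (PS0 : S → ℝ) (PS : S → A → S → ℝ) (PR : S → A → Measure ℝ)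
    [∀ s a, IsProbabilityMeasure (PR s a)] (π : S → A → ℝ) (γ : ℝ)
    (t : Fin (T + 1)) (s0 : S) (a0 : A) : ℝ :=
  trajExp T PS0 PS PR π
      (fun s a r => if s t = s0 ∧ a t = a0
        then ∑ t' ∈ Finset.Ici t, γ ^ ((t' : ℕ) - (t : ℕ)) * r t' else 0)
    / occProb T PS0 PS PR π t s0 a0

end

noncomputable section IPWAux

variable {S A : Type} [Fintype S] [Fintype A]

set_option linter.unusedSectionVars false

/-- Trajectory probability with a time-dependent policy. -/
def tdProb (n : ℕ) (ν : S → ℝ) (PS : S → A → S → ℝ) (Pol : Fin (n + 1) → S → A → ℝ)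
    (s : Fin (n + 1) → S) (a : Fin (n + 1) → A) : ℝ :=
  ν (s 0) * Pol 0 (s 0) (a 0) *
    ∏ t : Fin n, PS (s t.castSucc) (a t.castSucc) (s t.succ) * Pol t.succ (s t.succ) (a t.succ)

lemma sum_fun_cons {X : Type} [Fintype X] (n : ℕ) (g : (Fin (n + 1) → X) → ℝ) :
    ∑ f : Fin (n + 1) → X, g f = ∑ x : X, ∑ f : Fin n → X, g (Fin.cons x f) := by
  rw [← (Fin.consEquiv (fun _ : Fin (n+1) => X)).sum_comp g, Fintype.sum_prod_type]
  rfl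

lemma sum_sum_cons (n : ℕ) (g : (Fin (n + 1) → S) → (Fin (n + 1) → A) → ℝ) :
    ∑ s : Fin (n + 1) → S, ∑ a : Fin (n + 1) → A, g s a
      = ∑ s0 : S, ∑ a0 : A, ∑ s' : Fin n → S, ∑ a' : Fin n → A,
          g (Fin.cons s0 s') (Fin.cons a0 a') := by
  rw [sum_fun_cons n (fun s => ∑ a, g s a)]
  refine Finset.sum_congr rfl fun s0 _ => ?_
  calc ∑ s' : Fin n → S, ∑ a : Fin (n + 1) → A, g (Fin.cons s0 s') a
      = ∑ s' : Fin n → S, ∑ a0 : A, ∑ a' : Fin n → A, g (Fin.cons s0 s') (Fin.cons a0 a') :=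
        Finset.sum_congr rfl fun s' _ => sum_fun_cons n _
    _ = _ := Finset.sum_comm

lemma tdProb_cons (n : ℕ) (ν : S → ℝ) (PS : S → A → S → ℝ)
    (Pol : Fin (n + 2) → S → A → ℝ) (s0 : S) (a0 : A)
    (s : Fin (n + 1) → S) (a : Fin (n + 1) → A) :
    tdProb (n + 1) ν PS Pol (Fin.cons s0 s) (Fin.cons a0 a)
      = ν s0 * Pol 0 s0 a0 * tdProb n (PS s0 a0) PS (fun u => Pol u.succ) s a := by
  unfold tdProb
  rw [Fin.prod_univ_succ]
  simp only [Fin.cons_zero, Fin.cons_succ, Fin.castSucc_zero, ← Fin.succ_castSucc]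

lemma sum_tdProb (n : ℕ) (ν : S → ℝ) (PS : S → A → S → ℝ)
    (hPS : ∀ s a, ∑ s', PS s a s' = 1)
    (Pol : Fin (n + 1) → S → A → ℝ) (hPol : ∀ u s, ∑ a, Pol u s a = 1) :
    ∑ s : Fin (n + 1) → S, ∑ a : Fin (n + 1) → A, tdProb n ν PS Pol s a = ∑ x, ν x := by
  induction n generalizing ν with
  | zero =>
    rw [sum_sum_cons]
    simp only [tdProb, Fin.cons_zero, Finset.univ_eq_empty, Finset.prod_empty, mul_one]
    have h1 : ∀ c : ℝ, (∑ _s' : Fin 0 → S, ∑ _a' : Fin 0 → A, c) = c := by intro c; simp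
    simp only [h1, ← Finset.mul_sum, hPol, mul_one]
  | succ n ih =>
    rw [sum_sum_cons]
    simp only [tdProb_cons]
    have key : ∀ s0 a0, (∑ s' : Fin (n+1) → S, ∑ a' : Fin (n+1) → A,
        tdProb n (PS s0 a0) PS (fun u => Pol u.succ) s' a') = 1 := by
      intro s0 a0
      rw [ih (PS s0 a0) (fun u => Pol u.succ) (fun u s => hPol u.succ s)]
      exact hPS s0 a0
    simp only [← Finset.mul_sum, key, mul_one, hPol]

lemma marg_tdProb (n : ℕ) (ν : S → ℝ) (PS : S → A → S → ℝ)
    (hPS : ∀ s a, ∑ s', PS s a s' = 1)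
    (Pol Pol' : Fin (n + 1) → S → A → ℝ)
    (hPol : ∀ u s, ∑ a, Pol u s a = 1) (hPol' : ∀ u s, ∑ a, Pol' u s a = 1)
    (t : Fin (n + 1)) (hag : ∀ u, u ≤ t → Pol u = Pol' u) (φ : S → A → ℝ) :
    ∑ s : Fin (n + 1) → S, ∑ a : Fin (n + 1) → A, tdProb n ν PS Pol s a * φ (s t) (a t)
      = ∑ s : Fin (n + 1) → S, ∑ a : Fin (n + 1) → A, tdProb n ν PS Pol' s a * φ (s t) (a t) := by
  induction n generalizing ν with
  | zero =>
    have h0 : Pol 0 = Pol' 0 := hag 0 (Fin.zero_le t)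
    have ht : t = 0 := Fin.fin_one_eq_zero t
    subst ht
    simp only [tdProb, Finset.univ_eq_empty, Finset.prod_empty, mul_one, h0]
  | succ n ih =>
    have h0 : Pol 0 = Pol' 0 := hag 0 (Fin.zero_le t)
    rw [sum_sum_cons, sum_sum_cons]
    induction t using Fin.cases with
    | zero =>
      simp only [tdProb_cons, Fin.cons_zero]
      refine Finset.sum_congr rfl fun s0 _ => Finset.sum_congr rfl fun a0 _ => ?_
      have e1 : ∀ (P : Fin (n+1+1) → S → A → ℝ),
          (∑ s' : Fin (n+1) → S, ∑ a' : Fin (n+1) → A,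
            ν s0 * P 0 s0 a0 * tdProb n (PS s0 a0) PS (fun u => P u.succ) s' a' * φ s0 a0)
          = ν s0 * P 0 s0 a0 * φ s0 a0 *
              ∑ s' : Fin (n+1) → S, ∑ a' : Fin (n+1) → A,
                tdProb n (PS s0 a0) PS (fun u => P u.succ) s' a' := by
        intro P
        rw [Finset.mul_sum]
        refine Finset.sum_congr rfl fun s' _ => ?_
        rw [Finset.mul_sum]
        refine Finset.sum_congr rfl fun a' _ => ?_
        ring
      rw [e1 Pol, e1 Pol', h0,
        sum_tdProb n (PS s0 a0) PS hPS _ (fun u s => hPol u.succ s),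
        sum_tdProb n (PS s0 a0) PS hPS _ (fun u s => hPol' u.succ s)]
    | succ j =>
      simp only [tdProb_cons, Fin.cons_succ]
      refine Finset.sum_congr rfl fun s0 _ => Finset.sum_congr rfl fun a0 _ => ?_
      have e1 : ∀ (P : Fin (n+1+1) → S → A → ℝ),
          (∑ s' : Fin (n+1) → S, ∑ a' : Fin (n+1) → A,
            ν s0 * P 0 s0 a0 * tdProb n (PS s0 a0) PS (fun u => P u.succ) s' a' * φ (s' j) (a' j))
          = ν s0 * P 0 s0 a0 *
              ∑ s' : Fin (n+1) → S, ∑ a' : Fin (n+1) → A,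
                tdProb n (PS s0 a0) PS (fun u => P u.succ) s' a' * φ (s' j) (a' j) := by
        intro P
        rw [Finset.mul_sum]
        refine Finset.sum_congr rfl fun s' _ => ?_
        rw [Finset.mul_sum]
        refine Finset.sum_congr rfl fun a' _ => ?_
        ring
      rw [e1 Pol, e1 Pol', h0,
        ih (PS s0 a0) (fun u => Pol u.succ) (fun u => Pol' u.succ)
          (fun u s => hPol u.succ s) (fun u s => hPol' u.succ s) j
          (fun u hu => hag u.succ (Fin.succ_le_succ_iff.mpr hu))]

lemma trajProb_eq_tdProb (n : ℕ) (PS0 : S → ℝ) (PS : S → A → S → ℝ) (π : S → A → ℝ)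
    (s : Fin (n + 1) → S) (a : Fin (n + 1) → A) :
    trajProb n PS0 PS π s a = tdProb n PS0 PS (fun _ => π) s a := rfl

lemma tdProb_eq_prod (n : ℕ) (ν : S → ℝ) (PS : S → A → S → ℝ)
    (Pol : Fin (n + 1) → S → A → ℝ) (s : Fin (n + 1) → S) (a : Fin (n + 1) → A) :
    tdProb n ν PS Pol s a
      = ν (s 0) * (∏ u : Fin (n + 1), Pol u (s u) (a u)) *
          ∏ u : Fin n, PS (s u.castSucc) (a u.castSucc) (s u.succ) := by
  unfold tdProb
  rw [Fin.prod_univ_succ (f := fun u => Pol u (s u) (a u)), Finset.prod_mul_distrib]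
  ring

lemma weight_eq {T : ℕ} (PS0 : S → ℝ) (PS : S → A → S → ℝ) (πb πe : S → A → ℝ)
    (hpos : ∀ s a, 0 < πb s a) (t : Fin (T + 1))
    (s : Fin (T + 1) → S) (a : Fin (T + 1) → A) :
    trajProb T PS0 PS πb s a * rhoLE πe πb t s a
      = tdProb T PS0 PS (fun u => if u ≤ t then πe else πb) s a := by
  rw [trajProb_eq_tdProb, tdProb_eq_prod, tdProb_eq_prod, rhoLE]
  have hsplit : ∀ (f : Fin (T + 1) → ℝ),
      (∏ u : Fin (T + 1), f u) = (∏ u ∈ Finset.Iic t, f u) * ∏ u ∈ (Finset.Iic t)ᶜ, f u :=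
    fun f => (Finset.prod_mul_prod_compl (Finset.Iic t) f).symm
  rw [hsplit (fun u => πb (s u) (a u)), hsplit (fun u => (if u ≤ t then πe else πb) (s u) (a u))]
  have h1 : (∏ u ∈ Finset.Iic t, (if u ≤ t then πe else πb) (s u) (a u))
      = ∏ u ∈ Finset.Iic t, πe (s u) (a u) :=
    Finset.prod_congr rfl fun u hu => by rw [if_pos (Finset.mem_Iic.mp hu)]
  have h2 : (∏ u ∈ (Finset.Iic t)ᶜ, (if u ≤ t then πe else πb) (s u) (a u))
      = ∏ u ∈ (Finset.Iic t)ᶜ, πb (s u) (a u) :=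
    Finset.prod_congr rfl fun u hu => by
      rw [if_neg (by simpa [Finset.mem_Iic] using Finset.mem_compl.mp hu)]
  rw [h1, h2]
  have h3 : (∏ u ∈ Finset.Iic t, πb (s u) (a u)) *
        (∏ u ∈ Finset.Iic t, πe (s u) (a u) / πb (s u) (a u))
      = ∏ u ∈ Finset.Iic t, πe (s u) (a u) := by
    rw [← Finset.prod_mul_distrib]
    refine Finset.prod_congr rfl fun u _ => ?_
    rw [mul_comm, div_mul_cancel₀ _ (ne_of_gt (hpos (s u) (a u)))]
  calc PS0 (s 0) * ((∏ u ∈ Finset.Iic t, πb (s u) (a u)) * ∏ u ∈ (Finset.Iic t)ᶜ, πb (s u) (a u)) *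
        (∏ u : Fin T, PS (s u.castSucc) (a u.castSucc) (s u.succ)) *
        (∏ u ∈ Finset.Iic t, πe (s u) (a u) / πb (s u) (a u))
      = PS0 (s 0) * (((∏ u ∈ Finset.Iic t, πb (s u) (a u)) *
          (∏ u ∈ Finset.Iic t, πe (s u) (a u) / πb (s u) (a u))) *
          ∏ u ∈ (Finset.Iic t)ᶜ, πb (s u) (a u)) *
          (∏ u : Fin T, PS (s u.castSucc) (a u.castSucc) (s u.succ)) := by ring
    _ = _ := by rw [h3]

lemma map_eval_pi {n : ℕ} (μm : Fin (n + 1) → Measure ℝ)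
    [∀ i, IsProbabilityMeasure (μm i)] (t : Fin (n + 1)) :
    (Measure.pi μm).map (fun r => r t) = μm t := by
  ext u hu
  rw [Measure.map_apply (measurable_pi_apply t) hu]
  have hpre : (fun r : Fin (n + 1) → ℝ => r t) ⁻¹' u
      = Set.pi Set.univ (Function.update (fun _ => Set.univ) t u) := by
    rw [Set.eval_preimage]
  rw [hpre, Measure.pi_pi]
  rw [← Finset.mul_prod_erase Finset.univ _ (Finset.mem_univ t)]
  rw [Function.update_self]
  have h1 : ∀ i ∈ Finset.univ.erase t,
      μm i (Function.update (fun _ => Set.univ) t u i) = 1 := by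
    intro i hi
    rw [Function.update_of_ne (Finset.ne_of_mem_erase hi)]
    exact measure_univ
  rw [Finset.prod_congr rfl h1, Finset.prod_const_one, mul_one]

lemma integrable_eval {n : ℕ} (μm : Fin (n + 1) → Measure ℝ)
    [∀ i, IsProbabilityMeasure (μm i)] (t : Fin (n + 1))
    (h : Integrable (fun x : ℝ => x) (μm t)) :
    Integrable (fun r : Fin (n + 1) → ℝ => r t) (Measure.pi μm) := by
  have h2 : Integrable (fun x : ℝ => x) ((Measure.pi μm).map (fun r => r t)) := by
    rw [map_eval_pi μm t]; exact h
  exact (integrable_map_measure measurable_id.aestronglyMeasurable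
    (measurable_pi_apply t).aemeasurable).mp h2

lemma integral_eval {n : ℕ} (μm : Fin (n + 1) → Measure ℝ)
    [∀ i, IsProbabilityMeasure (μm i)] (t : Fin (n + 1)) :
    ∫ r : Fin (n + 1) → ℝ, r t ∂Measure.pi μm = ∫ x, x ∂μm t := by
  have h := integral_map (μ := Measure.pi μm) (φ := fun r => r t) (f := fun x : ℝ => x)
    (measurable_pi_apply t).aemeasurable measurable_id.aestronglyMeasurable
  rw [map_eval_pi μm t] at h
  exact h.symm

end IPWAux

/-- the IPW score is unbiased for the policy value:
`E_{H∼πb}[∑_{t=0}^T γ^t ρ_t^{πe}(H_t^{s,a}) R_t] = V^{πe} = E_{H∼πe}[∑_{t=0}^T γ^t R_t]`. -/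

theorem ipw_unbiased
    {S A : Type} [Fintype S] [Fintype A]
    (T : ℕ) (PS0 : S → ℝ) (PS : S → A → S → ℝ) (PR : S → A → Measure ℝ)
    [∀ s a, IsProbabilityMeasure (PR s a)]
    (πb πe : S → A → ℝ) (γ : ℝ)
    (hPS0 : IsInitDist PS0) (hPS : IsTransKernel PS)
    (hπb : IsPolicy πb) (hπe : IsPolicy πe)
    (hpos : ∀ s a, 0 < πb s a)
    (hγ0 : 0 ≤ γ) (hγ1 : γ ≤ 1)
    (hInt : ∀ s a, MeasureTheory.Integrable (fun x : ℝ => x) (PR s a)) :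
    trajExp T PS0 PS PR πb
        (fun s a r => ∑ t : Fin (T + 1), γ ^ (t : ℕ) * (rhoLE πe πb t s a * r t))
      = trajExp T PS0 PS PR πe
          (fun _ _ r => ∑ t : Fin (T + 1), γ ^ (t : ℕ) * r t) := by
  classical
  have hPSsum : ∀ s a, ∑ s', PS s a s' = 1 := fun s a => (hPS s a).2
  have hπbsum : ∀ s, ∑ a, πb s a = 1 := fun s => (hπb s).2
  have hπesum : ∀ s, ∑ a, πe s a = 1 := fun s => (hπe s).2
  have hint : ∀ (s : Fin (T+1) → S) (a : Fin (T+1) → A) (w : Fin (T+1) → ℝ),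
      (∫ r : Fin (T+1) → ℝ, (∑ t, w t * r t) ∂(Measure.pi fun t => PR (s t) (a t)))
        = ∑ t, w t * ∫ x, x ∂PR (s t) (a t) := by
    intro s a w
    rw [integral_finset_sum _
      (fun t _ => (integrable_eval _ t (hInt (s t) (a t))).const_mul (w t))]
    refine Finset.sum_congr rfl fun t _ => ?_
    rw [integral_const_mul, integral_eval]
  have hL : ∀ (s : Fin (T+1) → S) (a : Fin (T+1) → A),
      (∫ r : Fin (T+1) → ℝ, (∑ t : Fin (T+1), γ ^ (t : ℕ) * (rhoLE πe πb t s a * r t))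
          ∂(Measure.pi fun t => PR (s t) (a t)))
        = ∑ t : Fin (T+1), γ ^ (t : ℕ) * rhoLE πe πb t s a * ∫ x, x ∂PR (s t) (a t) := by
    intro s a
    have h1 : (fun r : Fin (T+1) → ℝ =>
          ∑ t : Fin (T+1), γ ^ (t : ℕ) * (rhoLE πe πb t s a * r t))
        = fun r => ∑ t : Fin (T+1), (γ ^ (t : ℕ) * rhoLE πe πb t s a) * r t := by
      funext r; exact Finset.sum_congr rfl fun t _ => (mul_assoc _ _ _).symm
    rw [h1, hint]
  have hR : ∀ (s : Fin (T+1) → S) (a : Fin (T+1) → A),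
      (∫ r : Fin (T+1) → ℝ, (∑ t : Fin (T+1), γ ^ (t : ℕ) * r t)
          ∂(Measure.pi fun t => PR (s t) (a t)))
        = ∑ t : Fin (T+1), γ ^ (t : ℕ) * ∫ x, x ∂PR (s t) (a t) :=
    fun s a => hint s a _
  unfold trajExp
  simp only [hL, hR]
  set mix : Fin (T+1) → Fin (T+1) → S → A → ℝ :=
    fun t u => if u ≤ t then πe else πb with hmix
  have hmixsum : ∀ t u s, ∑ a, mix t u s a = 1 := by
    intro t u s
    by_cases h : u ≤ t
    · simp only [hmix, if_pos h]; exact hπesum s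
    · simp only [hmix, if_neg h]; exact hπbsum s
  have swap3 : ∀ (F : (Fin (T+1) → S) → (Fin (T+1) → A) → Fin (T+1) → ℝ),
      (∑ s : Fin (T+1) → S, ∑ a : Fin (T+1) → A, ∑ t : Fin (T+1), F s a t)
        = ∑ t : Fin (T+1), ∑ s : Fin (T+1) → S, ∑ a : Fin (T+1) → A, F s a t := by
    intro F
    calc (∑ s : Fin (T+1) → S, ∑ a : Fin (T+1) → A, ∑ t : Fin (T+1), F s a t)
        = ∑ s : Fin (T+1) → S, ∑ t : Fin (T+1), ∑ a : Fin (T+1) → A, F s a t :=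
          Finset.sum_congr rfl fun s _ => Finset.sum_comm
      _ = _ := Finset.sum_comm
  calc (∑ s : Fin (T+1) → S, ∑ a : Fin (T+1) → A, trajProb T PS0 PS πb s a *
          ∑ t : Fin (T+1), γ ^ (t : ℕ) * rhoLE πe πb t s a * ∫ x, x ∂PR (s t) (a t))
      = ∑ s : Fin (T+1) → S, ∑ a : Fin (T+1) → A, ∑ t : Fin (T+1),
          tdProb T PS0 PS (mix t) s a * (γ ^ (t : ℕ) * ∫ x, x ∂PR (s t) (a t)) := by
        refine Finset.sum_congr rfl fun s _ => Finset.sum_congr rfl fun a _ => ?_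
        rw [Finset.mul_sum]
        refine Finset.sum_congr rfl fun t _ => ?_
        rw [← weight_eq PS0 PS πb πe hpos t s a]
        ring
    _ = ∑ t : Fin (T+1), ∑ s : Fin (T+1) → S, ∑ a : Fin (T+1) → A,
          tdProb T PS0 PS (mix t) s a * (γ ^ (t : ℕ) * ∫ x, x ∂PR (s t) (a t)) := swap3 _
    _ = ∑ t : Fin (T+1), ∑ s : Fin (T+1) → S, ∑ a : Fin (T+1) → A,
          tdProb T PS0 PS (fun _ => πe) s a * (γ ^ (t : ℕ) * ∫ x, x ∂PR (s t) (a t)) := by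
        refine Finset.sum_congr rfl fun t _ => ?_
        exact marg_tdProb T PS0 PS hPSsum (mix t) (fun _ => πe) (hmixsum t)
          (fun _ s => hπesum s) t
          (fun u hu => by simp only [hmix, if_pos hu])
          (fun x y => γ ^ (t : ℕ) * ∫ x', x' ∂PR x y)
    _ = ∑ s : Fin (T+1) → S, ∑ a : Fin (T+1) → A, ∑ t : Fin (T+1),
          tdProb T PS0 PS (fun _ => πe) s a * (γ ^ (t : ℕ) * ∫ x, x ∂PR (s t) (a t)) :=
        (swap3 _).symm
    _ = ∑ s : Fin (T+1) → S, ∑ a : Fin (T+1) → A, trajProb T PS0 PS πe s a *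
          ∑ t : Fin (T+1), γ ^ (t : ℕ) * ∫ x, x ∂PR (s t) (a t) := by
        refine Finset.sum_congr rfl fun s _ => Finset.sum_congr rfl fun a _ => ?_
        rw [trajProb_eq_tdProb, Finset.mul_sum]
end

section
/- The doubly robust score evaluated at the true nuisance functions is unbiased for the policy value: E_{H∼π_b}[ψ(H; π_b, {q_t^{π_e}}_{t=0}^T)] = V^{π_e}. -/
open MeasureTheory

set_option linter.unusedSectionVars false
noncomputable section DRAux

variable {S A : Type} [Fintype S] [Fintype A]

lemma sum_swap4 {α β γ δ M : Type} [Fintype α] [Fintype β] [Fintype γ] [Fintype δ]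
    [AddCommMonoid M] (F : α → β → γ → δ → M) :
    ∑ a, ∑ b, ∑ c, ∑ d, F a b c d = ∑ c, ∑ d, ∑ a, ∑ b, F a b c d := by
  calc ∑ a, ∑ b, ∑ c, ∑ d, F a b c d
      = ∑ a, ∑ c, ∑ b, ∑ d, F a b c d :=
        Finset.sum_congr rfl fun a _ => Finset.sum_comm
    _ = ∑ c, ∑ a, ∑ b, ∑ d, F a b c d := Finset.sum_comm
    _ = ∑ c, ∑ a, ∑ d, ∑ b, F a b c d :=
        Finset.sum_congr rfl fun c _ => Finset.sum_congr rfl fun a _ => Finset.sum_comm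
    _ = ∑ c, ∑ d, ∑ a, ∑ b, F a b c d :=
        Finset.sum_congr rfl fun c _ => Finset.sum_comm

noncomputable def dvec (PS : S → A → S → ℝ) (Pi : ℕ → S → A → ℝ) (p : S → ℝ) : ℕ → S → ℝ
  | 0 => p
  | (n+1) => fun s' => ∑ s, ∑ a, dvec PS Pi p n s * Pi n s a * PS s a s'

lemma dvec_congr {PS : S → A → S → ℝ} {Pi1 Pi2 : ℕ → S → A → ℝ} {p : S → ℝ} {n : ℕ}
    (h : ∀ k < n, Pi1 k = Pi2 k) : dvec PS Pi1 p n = dvec PS Pi2 p n := by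
  induction n with
  | zero => rfl
  | succ n ih =>
    funext s'
    simp only [dvec]
    rw [ih (fun k hk => h k (Nat.lt_succ_of_lt hk)), h n (Nat.lt_succ_self n)]

lemma dvec_shift (PS : S → A → S → ℝ) (Pi : ℕ → S → A → ℝ) (p : S → ℝ) (n : ℕ) (s1 : S) :
    ∑ s0, ∑ a0, p s0 * Pi 0 s0 a0 * dvec PS (fun k => Pi (k+1)) (PS s0 a0) n s1
      = dvec PS Pi p (n+1) s1 := by
  induction n generalizing s1 with
  | zero => simp [dvec]
  | succ n ih =>
    conv_lhs => simp only [dvec]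
    have hr : dvec PS Pi p (n+1+1) s1
        = ∑ s, ∑ a, dvec PS Pi p (n+1) s * Pi (n+1) s a * PS s a s1 := rfl
    rw [hr]
    simp only [← ih, Finset.mul_sum, Finset.sum_mul]
    rw [sum_swap4]
    refine Finset.sum_congr rfl fun s _ => Finset.sum_congr rfl fun a _ =>
      Finset.sum_congr rfl fun s0 _ => Finset.sum_congr rfl fun a0 _ => by ring

lemma sum_cons_real' {n : ℕ} {α : Type} [Fintype α] (f : (Fin (n+1) → α) → ℝ) :
    ∑ x : Fin (n+1) → α, f x = ∑ x0 : α, ∑ x' : Fin n → α, f (Fin.cons x0 x') := by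
  rw [← (Fin.consEquiv (fun _ : Fin (n+1) => α)).sum_comp f, Fintype.sum_prod_type]
  rfl

lemma sum_cons2 {n : ℕ} (f : (Fin (n+1) → S) → (Fin (n+1) → A) → ℝ) :
    ∑ s : Fin (n+1) → S, ∑ a : Fin (n+1) → A, f s a
      = ∑ s0, ∑ a0, ∑ s' : Fin n → S, ∑ a' : Fin n → A,
          f (Fin.cons s0 s') (Fin.cons a0 a') := by
  calc ∑ s : Fin (n+1) → S, ∑ a : Fin (n+1) → A, f s a
      = ∑ s0, ∑ s' : Fin n → S, ∑ a : Fin (n+1) → A, f (Fin.cons s0 s') a :=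
        sum_cons_real' (fun s => ∑ a, f s a)
    _ = ∑ s0, ∑ s' : Fin n → S, ∑ a0, ∑ a' : Fin n → A,
          f (Fin.cons s0 s') (Fin.cons a0 a') :=
        Finset.sum_congr rfl fun s0 _ => Finset.sum_congr rfl fun s' _ =>
          sum_cons_real' _
    _ = _ := Finset.sum_congr rfl fun s0 _ => Finset.sum_comm

lemma traj_sum_one (PS : S → A → S → ℝ) (hPS : ∀ s a, ∑ s', PS s a s' = 1) :
    ∀ (T : ℕ) (p : S → ℝ) (Pi : ℕ → S → A → ℝ), (∀ k s, ∑ a, Pi k s a = 1) →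
    ∑ s : Fin (T+1) → S, ∑ a : Fin (T+1) → A,
      (p (s 0) * ∏ k : Fin T, PS (s k.castSucc) (a k.castSucc) (s k.succ)) *
        (∏ k : Fin (T+1), Pi (k : ℕ) (s k) (a k))
      = ∑ s0, p s0 := by
  intro T
  induction T with
  | zero =>
    intro p Pi hPi
    rw [sum_cons2]
    refine Finset.sum_congr rfl fun s0 _ => ?_
    simp only [Fintype.sum_unique, Finset.univ_eq_empty, Finset.prod_empty, mul_one,
      Fin.prod_univ_succ, Fin.cons_zero, Fin.val_zero]
    rw [← Finset.mul_sum, hPi, mul_one]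
  | succ T ih =>
    intro p Pi hPi
    rw [sum_cons2]
    have inner : ∀ (s0 : S) (a0 : A),
        ∑ s' : Fin (T+1) → S, ∑ a' : Fin (T+1) → A,
          (PS s0 a0 (s' 0) * ∏ k : Fin T, PS (s' k.castSucc) (a' k.castSucc) (s' k.succ)) *
            (∏ k : Fin (T+1), Pi ((k : ℕ)+1) (s' k) (a' k)) = ∑ s1, PS s0 a0 s1 :=
      fun s0 a0 => ih (PS s0 a0) (fun k => Pi (k+1)) (fun k s => hPi (k+1) s)
    calc ∑ s0, ∑ a0, ∑ s' : Fin (T+1) → S, ∑ a' : Fin (T+1) → A,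
          (p (Fin.cons s0 s' 0) *
            ∏ k : Fin (T+1), PS (Fin.cons s0 s' k.castSucc) (Fin.cons a0 a' k.castSucc)
              (Fin.cons s0 s' k.succ)) *
          (∏ k : Fin (T+2), Pi (k : ℕ) (Fin.cons s0 s' k) (Fin.cons a0 a' k))
        = ∑ s0, ∑ a0, (p s0 * Pi 0 s0 a0) *
            ∑ s' : Fin (T+1) → S, ∑ a' : Fin (T+1) → A,
              (PS s0 a0 (s' 0) * ∏ k : Fin T, PS (s' k.castSucc) (a' k.castSucc) (s' k.succ)) *
                (∏ k : Fin (T+1), Pi ((k : ℕ)+1) (s' k) (a' k)) := by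
          refine Finset.sum_congr rfl fun s0 _ => Finset.sum_congr rfl fun a0 _ => ?_
          simp only [Finset.mul_sum]
          refine Finset.sum_congr rfl fun s' _ => Finset.sum_congr rfl fun a' _ => ?_
          simp only [Fin.prod_univ_succ, Fin.cons_zero, Fin.cons_succ, Fin.val_succ,
            Fin.val_zero, ← Fin.succ_castSucc, Fin.castSucc_zero]
          ring
      _ = ∑ s0, p s0 := by
          simp only [inner, hPS]
          refine Finset.sum_congr rfl fun s0 _ => ?_
          simp only [mul_one]
          rw [← Finset.mul_sum, hPi, mul_one]

set_option maxHeartbeats 1000000 in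
lemma traj_sum_core (PS : S → A → S → ℝ) (hPS : ∀ s a, ∑ s', PS s a s' = 1) :
    ∀ (T : ℕ) (p : S → ℝ) (Pi : ℕ → S → A → ℝ), (∀ k s, ∑ a, Pi k s a = 1) →
    ∀ (t : Fin (T+1)) (g : S → A → ℝ),
    ∑ s : Fin (T+1) → S, ∑ a : Fin (T+1) → A,
      (p (s 0) * ∏ k : Fin T, PS (s k.castSucc) (a k.castSucc) (s k.succ)) *
        ((∏ k : Fin (T+1), Pi (k : ℕ) (s k) (a k)) * g (s t) (a t))
      = ∑ s0, ∑ a0, dvec PS Pi p (t : ℕ) s0 * (Pi (t : ℕ) s0 a0 * g s0 a0) := by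
  intro T
  induction T with
  | zero =>
    intro p Pi hPi t g
    have ht : t = 0 := Fin.fin_one_eq_zero t
    subst ht
    rw [sum_cons2]
    refine Finset.sum_congr rfl fun s0 _ => ?_
    refine Finset.sum_congr rfl fun a0 _ => ?_
    simp only [Fintype.sum_unique, Finset.univ_eq_empty, Finset.prod_empty, mul_one,
      Fin.prod_univ_succ, Fin.cons_zero, Fin.val_zero, dvec]
  | succ T ih =>
    intro p Pi hPi t g
    rw [sum_cons2]
    induction t using Fin.cases with
    | zero =>
      have inner : ∀ (s0 : S) (a0 : A),
          ∑ s' : Fin (T+1) → S, ∑ a' : Fin (T+1) → A,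
            (PS s0 a0 (s' 0) * ∏ k : Fin T, PS (s' k.castSucc) (a' k.castSucc) (s' k.succ)) *
              (∏ k : Fin (T+1), Pi ((k : ℕ)+1) (s' k) (a' k)) = ∑ s1, PS s0 a0 s1 :=
        fun s0 a0 => traj_sum_one PS hPS T (PS s0 a0) (fun k => Pi (k+1))
          (fun k s => hPi (k+1) s)
      trans (∑ s0, ∑ a0, (p s0 * (Pi 0 s0 a0 * g s0 a0)) *
              ∑ s' : Fin (T+1) → S, ∑ a' : Fin (T+1) → A,
                (PS s0 a0 (s' 0) *
                  ∏ k : Fin T, PS (s' k.castSucc) (a' k.castSucc) (s' k.succ)) *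
                  (∏ k : Fin (T+1), Pi ((k : ℕ)+1) (s' k) (a' k)))
      · refine Finset.sum_congr rfl fun s0 _ => Finset.sum_congr rfl fun a0 _ => ?_
        simp only [Finset.mul_sum]
        refine Finset.sum_congr rfl fun s' _ => Finset.sum_congr rfl fun a' _ => ?_
        simp only [Fin.prod_univ_succ, Fin.cons_zero, Fin.cons_succ, Fin.val_succ,
          Fin.val_zero, ← Fin.succ_castSucc, Fin.castSucc_zero]
        ring
      · simp only [inner, hPS, mul_one, Fin.val_zero, dvec]
    | succ u =>
      have inner : ∀ (s0 : S) (a0 : A),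
          ∑ s' : Fin (T+1) → S, ∑ a' : Fin (T+1) → A,
            (PS s0 a0 (s' 0) * ∏ k : Fin T, PS (s' k.castSucc) (a' k.castSucc) (s' k.succ)) *
              ((∏ k : Fin (T+1), Pi ((k : ℕ)+1) (s' k) (a' k)) * g (s' u) (a' u))
          = ∑ s1, ∑ a1, dvec PS (fun k => Pi (k+1)) (PS s0 a0) (u : ℕ) s1 *
              (Pi ((u : ℕ)+1) s1 a1 * g s1 a1) :=
        fun s0 a0 => ih (PS s0 a0) (fun k => Pi (k+1)) (fun k s => hPi (k+1) s) u g
      trans (∑ s0, ∑ a0, (p s0 * Pi 0 s0 a0) *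
              ∑ s' : Fin (T+1) → S, ∑ a' : Fin (T+1) → A,
                (PS s0 a0 (s' 0) *
                  ∏ k : Fin T, PS (s' k.castSucc) (a' k.castSucc) (s' k.succ)) *
                  ((∏ k : Fin (T+1), Pi ((k : ℕ)+1) (s' k) (a' k)) * g (s' u) (a' u)))
      · refine Finset.sum_congr rfl fun s0 _ => Finset.sum_congr rfl fun a0 _ => ?_
        simp only [Finset.mul_sum]
        refine Finset.sum_congr rfl fun s' _ => Finset.sum_congr rfl fun a' _ => ?_
        simp only [Fin.prod_univ_succ, Fin.cons_zero, Fin.cons_succ, Fin.val_succ,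
          Fin.val_zero, ← Fin.succ_castSucc, Fin.castSucc_zero]
        ring
      trans (∑ s1, ∑ a1,
              (∑ s0, ∑ a0, p s0 * Pi 0 s0 a0 *
                dvec PS (fun k => Pi (k+1)) (PS s0 a0) (u : ℕ) s1) *
              (Pi ((u : ℕ)+1) s1 a1 * g s1 a1))
      · simp only [inner, Finset.mul_sum, Finset.sum_mul]
        rw [sum_swap4]
        refine Finset.sum_congr rfl fun s1 _ => Finset.sum_congr rfl fun a1 _ =>
          Finset.sum_congr rfl fun s0 _ => Finset.sum_congr rfl fun a0 _ => by ring
      · simp only [dvec_shift, Fin.val_succ]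


lemma measurePreserving_eval_pi' {ι : Type} [Fintype ι] [DecidableEq ι]
    (ν : ι → Measure ℝ) [∀ i, IsProbabilityMeasure (ν i)] (i : ι) :
    MeasurePreserving (Function.eval i) (Measure.pi ν) (ν i) := by
  refine ⟨measurable_pi_apply i, ?_⟩
  ext s hs
  rw [Measure.map_apply (measurable_pi_apply i) hs]
  have hpre : Function.eval i ⁻¹' s
      = Set.pi Set.univ (Function.update (fun _ : ι => (Set.univ : Set ℝ)) i s) := by
    ext x
    simp only [Set.mem_preimage, Set.mem_univ_pi, Function.eval]
    constructor
    · intro hx j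
      rcases eq_or_ne j i with rfl | hj
      · simpa [Function.update_self] using hx
      · simp [Function.update_of_ne hj]
    · intro h
      simpa [Function.update_self] using h i
  rw [hpre, Measure.pi_pi]
  rw [Fintype.prod_eq_single i (fun j hj => by simp [Function.update_of_ne hj])]
  simp

lemma integral_linear_pi' {T : ℕ} (ν : Fin (T+1) → Measure ℝ)
    [∀ i, IsProbabilityMeasure (ν i)]
    (hInt : ∀ i, Integrable (fun x : ℝ => x) (ν i)) (c d : Fin (T+1) → ℝ) :
    ∫ r : Fin (T+1) → ℝ, (∑ t, (c t * r t + d t)) ∂(Measure.pi ν)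
      = ∑ t, (c t * ∫ x, x ∂(ν t) + d t) := by
  have hmp : ∀ i, MeasurePreserving (Function.eval i) (Measure.pi ν) (ν i) :=
    fun i => measurePreserving_eval_pi' ν i
  have hint : ∀ i, Integrable (fun r : Fin (T+1) → ℝ => r i) (Measure.pi ν) :=
    fun i => ((hmp i).integrable_comp aestronglyMeasurable_id).mpr (hInt i)
  have heval : ∀ i, ∫ r : Fin (T+1) → ℝ, r i ∂(Measure.pi ν) = ∫ x, x ∂(ν i) := by
    intro i
    rw [← (hmp i).map_eq]
    exact (integral_map (hmp i).measurable.aemeasurable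
      (f := fun x : ℝ => x) measurable_id.aestronglyMeasurable).symm
  rw [integral_finset_sum (f := fun (t : Fin (T+1)) (r : Fin (T+1) → ℝ) => c t * r t + d t) Finset.univ
    (fun t _ => ((hint t).const_mul (c t)).add (integrable_const (d t)))]
  refine Finset.sum_congr rfl fun t _ => ?_
  rw [integral_add ((hint t).const_mul (c t)) (integrable_const (d t)),
    integral_const_mul, heval t, integral_const]
  simp

section Pointwise

variable {T : ℕ}

lemma trajProb_factor (T : ℕ) (PS0 : S → ℝ) (PS : S → A → S → ℝ) (π : S → A → ℝ)
    (s : Fin (T+1) → S) (a : Fin (T+1) → A) :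
    trajProb T PS0 PS π s a
      = (PS0 (s 0) * ∏ k : Fin T, PS (s k.castSucc) (a k.castSucc) (s k.succ)) *
          ∏ k : Fin (T+1), π (s k) (a k) := by
  unfold trajProb
  rw [Finset.prod_mul_distrib]
  conv_rhs => rw [Fin.prod_univ_succ (f := fun k : Fin (T+1) => π (s k) (a k))]
  ring

lemma rho_le_prod (πe πb : S → A → ℝ) (hpos : ∀ s a, 0 < πb s a) (t : Fin (T+1))
    (s : Fin (T+1) → S) (a : Fin (T+1) → A) :
    (∏ k : Fin (T+1), πb (s k) (a k)) * rhoLE πe πb t s a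
      = ∏ k : Fin (T+1),
          (if (k : ℕ) ≤ (t : ℕ) then πe (s k) (a k) else πb (s k) (a k)) := by
  unfold rhoLE
  have h1 : ∏ t' ∈ Finset.Iic t, πe (s t') (a t') / πb (s t') (a t')
      = ∏ k : Fin (T+1),
          (if (k : ℕ) ≤ (t : ℕ) then πe (s k) (a k) / πb (s k) (a k) else 1) := by
    have h2 : ∀ k : Fin (T+1),
        (if (k : ℕ) ≤ (t : ℕ) then πe (s k) (a k) / πb (s k) (a k) else 1)
          = (if k ∈ Finset.Iic t then πe (s k) (a k) / πb (s k) (a k) else 1) :=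
      fun k => by simp only [Finset.mem_Iic, Fin.le_def]
    calc ∏ t' ∈ Finset.Iic t, πe (s t') (a t') / πb (s t') (a t')
        = ∏ k ∈ Finset.univ ∩ Finset.Iic t, πe (s k) (a k) / πb (s k) (a k) := by
          rw [Finset.univ_inter]
      _ = ∏ k : Fin (T+1), (if k ∈ Finset.Iic t then πe (s k) (a k) / πb (s k) (a k) else 1) :=
          (Finset.prod_ite_mem _ _ _).symm
      _ = _ := Finset.prod_congr rfl fun k _ => (h2 k).symm
  rw [h1, ← Finset.prod_mul_distrib]
  refine Finset.prod_congr rfl fun k _ => ?_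
  by_cases h : (k : ℕ) ≤ (t : ℕ) <;> simp only [h, if_true, if_false, mul_one]
  rw [mul_comm, div_mul_cancel₀ _ (ne_of_gt (hpos _ _))]

lemma rho_lt_prod (πe πb : S → A → ℝ) (hpos : ∀ s a, 0 < πb s a) (t : Fin (T+1))
    (s : Fin (T+1) → S) (a : Fin (T+1) → A) :
    (∏ k : Fin (T+1), πb (s k) (a k)) * rhoLT πe πb t s a
      = ∏ k : Fin (T+1),
          (if (k : ℕ) < (t : ℕ) then πe (s k) (a k) else πb (s k) (a k)) := by
  unfold rhoLT
  have h1 : ∏ t' ∈ Finset.Iio t, πe (s t') (a t') / πb (s t') (a t')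
      = ∏ k : Fin (T+1),
          (if (k : ℕ) < (t : ℕ) then πe (s k) (a k) / πb (s k) (a k) else 1) := by
    have h2 : ∀ k : Fin (T+1),
        (if (k : ℕ) < (t : ℕ) then πe (s k) (a k) / πb (s k) (a k) else 1)
          = (if k ∈ Finset.Iio t then πe (s k) (a k) / πb (s k) (a k) else 1) :=
      fun k => by simp only [Finset.mem_Iio, Fin.lt_def]
    calc ∏ t' ∈ Finset.Iio t, πe (s t') (a t') / πb (s t') (a t')
        = ∏ k ∈ Finset.univ ∩ Finset.Iio t, πe (s k) (a k) / πb (s k) (a k) := by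
          rw [Finset.univ_inter]
      _ = ∏ k : Fin (T+1), (if k ∈ Finset.Iio t then πe (s k) (a k) / πb (s k) (a k) else 1) :=
          (Finset.prod_ite_mem _ _ _).symm
      _ = _ := Finset.prod_congr rfl fun k _ => (h2 k).symm
  rw [h1, ← Finset.prod_mul_distrib]
  refine Finset.prod_congr rfl fun k _ => ?_
  by_cases h : (k : ℕ) < (t : ℕ) <;> simp only [h, if_true, if_false, mul_one]
  rw [mul_comm, div_mul_cancel₀ _ (ne_of_gt (hpos _ _))]

lemma expandPlain (T : ℕ) (PS0 : S → ℝ) (PS : S → A → S → ℝ) (π : S → A → ℝ)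
    (hPS1 : ∀ s a, ∑ s', PS s a s' = 1) (hπ1 : ∀ s, ∑ a, π s a = 1)
    (t : Fin (T+1)) (g : S → A → ℝ) :
    ∑ s : Fin (T+1) → S, ∑ a : Fin (T+1) → A, trajProb T PS0 PS π s a * g (s t) (a t)
      = ∑ s0, ∑ a0, dvec PS (fun _ => π) PS0 (t : ℕ) s0 * (π s0 a0 * g s0 a0) := by
  have hcore := traj_sum_core PS hPS1 T PS0 (fun _ => π) (fun k s => hπ1 s) t g
  rw [← hcore]
  refine Finset.sum_congr rfl fun s _ => Finset.sum_congr rfl fun a _ => ?_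
  rw [trajProb_factor]
  ring

lemma expandLE (T : ℕ) (PS0 : S → ℝ) (PS : S → A → S → ℝ) (πe πb : S → A → ℝ)
    (hPS1 : ∀ s a, ∑ s', PS s a s' = 1) (hπe1 : ∀ s, ∑ a, πe s a = 1)
    (hπb1 : ∀ s, ∑ a, πb s a = 1) (hpos : ∀ s a, 0 < πb s a)
    (t : Fin (T+1)) (g : S → A → ℝ) :
    ∑ s : Fin (T+1) → S, ∑ a : Fin (T+1) → A,
        trajProb T PS0 PS πb s a * (rhoLE πe πb t s a * g (s t) (a t))
      = ∑ s0, ∑ a0, dvec PS (fun k => if k ≤ (t : ℕ) then πe else πb) PS0 (t : ℕ) s0 *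
          (πe s0 a0 * g s0 a0) := by
  have hcore := traj_sum_core PS hPS1 T PS0 (fun k => if k ≤ (t : ℕ) then πe else πb)
    (fun k s => by by_cases h : k ≤ (t : ℕ) <;> simp [h, hπe1, hπb1]) t g
  simp only [ite_apply, le_refl, if_true] at hcore
  rw [← hcore]
  refine Finset.sum_congr rfl fun s _ => Finset.sum_congr rfl fun a _ => ?_
  rw [trajProb_factor, ← rho_le_prod πe πb hpos t s a]
  ring

lemma expandLT (T : ℕ) (PS0 : S → ℝ) (PS : S → A → S → ℝ) (πe πb : S → A → ℝ)
    (hPS1 : ∀ s a, ∑ s', PS s a s' = 1) (hπe1 : ∀ s, ∑ a, πe s a = 1)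
    (hπb1 : ∀ s, ∑ a, πb s a = 1) (hpos : ∀ s a, 0 < πb s a)
    (t : Fin (T+1)) (g : S → A → ℝ) :
    ∑ s : Fin (T+1) → S, ∑ a : Fin (T+1) → A,
        trajProb T PS0 PS πb s a * (rhoLT πe πb t s a * g (s t) (a t))
      = ∑ s0, ∑ a0, dvec PS (fun k => if k < (t : ℕ) then πe else πb) PS0 (t : ℕ) s0 *
          (πb s0 a0 * g s0 a0) := by
  have hcore := traj_sum_core PS hPS1 T PS0 (fun k => if k < (t : ℕ) then πe else πb)
    (fun k s => by by_cases h : k < (t : ℕ) <;> simp [h, hπe1, hπb1]) t g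
  simp only [ite_apply, lt_irrefl, if_false] at hcore
  rw [← hcore]
  refine Finset.sum_congr rfl fun s _ => Finset.sum_congr rfl fun a _ => ?_
  rw [trajProb_factor, ← rho_lt_prod πe πb hpos t s a]
  ring

lemma sum_swap3 {α β γ : Type} [Fintype α] [Fintype β] [Fintype γ]
    (F : α → β → γ → ℝ) :
    ∑ a, ∑ b, ∑ c, F a b c = ∑ c, ∑ a, ∑ b, F a b c := by
  calc ∑ a, ∑ b, ∑ c, F a b c
      = ∑ a, ∑ c, ∑ b, F a b c := Finset.sum_congr rfl fun a _ => Finset.sum_comm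
    _ = ∑ c, ∑ a, ∑ b, F a b c := Finset.sum_comm

end Pointwise

end DRAux

/-- the doubly robust score evaluated at the true nuisance functions
(the true behavior policy `πb` and the conditional-expectation value functions
`q_t^{πe}`) is unbiased for the policy value:
`E_{H∼πb}[ψ(H; πb, {q_t^{πe}})] = V^{πe} = E_{H∼πe}[∑_t γ^t R_t]`. -/
theorem doubly_robust_score_unbiased_at_truth
    {S A : Type} [Fintype S] [Fintype A] [DecidableEq S] [DecidableEq A]
    (T : ℕ) (PS0 : S → ℝ) (PS : S → A → S → ℝ) (PR : S → A → Measure ℝ)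
    [∀ s a, IsProbabilityMeasure (PR s a)]
    (μ : S → A → ℝ) (hμ : ∀ s a, μ s a = ∫ x, x ∂(PR s a))
    (hInt : ∀ s a, MeasureTheory.Integrable (fun x : ℝ => x) (PR s a))
    (πb πe : S → A → ℝ) (γ : ℝ)
    (hPS0 : IsInitDist PS0) (hPS : IsTransKernel PS)
    (hπb : IsPolicy πb) (hπe : IsPolicy πe)
    (hpos : ∀ s a, 0 < πb s a)
    (hγ0 : 0 ≤ γ) (hγ1 : γ ≤ 1) :
    trajExp T PS0 PS PR πb (psiDR πe πb γ (qCond T PS0 PS PR πe γ))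
      = trajExp T PS0 PS PR πe (fun _ _ r => ∑ t : Fin (T + 1), γ ^ (t : ℕ) * r t) := by
  have hPS1 : ∀ s a, ∑ s', PS s a s' = 1 := fun s a => (hPS s a).2
  have hπb1 : ∀ s, ∑ a, πb s a = 1 := fun s => (hπb s).2
  have hπe1 : ∀ s, ∑ a, πe s a = 1 := fun s => (hπe s).2
  set q : Fin (T + 1) → S → A → ℝ := qCond T PS0 PS PR πe γ with hqdef
  unfold trajExp
  have hIpsi : ∀ (s : Fin (T + 1) → S) (a : Fin (T + 1) → A),
      ∫ r : Fin (T + 1) → ℝ, psiDR πe πb γ q s a r ∂(Measure.pi fun i => PR (s i) (a i))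
        = ∑ t : Fin (T + 1), γ ^ (t : ℕ) *
            (rhoLE πe πb t s a * (μ (s t) (a t) - q t (s t) (a t))
              + rhoLT πe πb t s a * ∑ a' : A, πe (s t) a' * q t (s t) a') := by
    intro s a
    have h1 : ∀ r : Fin (T + 1) → ℝ, psiDR πe πb γ q s a r
        = ∑ t : Fin (T + 1), ((γ ^ (t : ℕ) * rhoLE πe πb t s a) * r t
            + γ ^ (t : ℕ) * (rhoLT πe πb t s a * (∑ a' : A, πe (s t) a' * q t (s t) a')
                - rhoLE πe πb t s a * q t (s t) (a t))) := by
      intro r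
      unfold psiDR
      exact Finset.sum_congr rfl fun t _ => by ring
    have hil := integral_linear_pi' (fun i => PR (s i) (a i))
      (fun i => hInt (s i) (a i))
      (fun t => γ ^ (t : ℕ) * rhoLE πe πb t s a)
      (fun t => γ ^ (t : ℕ) * (rhoLT πe πb t s a * (∑ a' : A, πe (s t) a' * q t (s t) a')
          - rhoLE πe πb t s a * q t (s t) (a t)))
    simp only [h1]
    rw [hil]
    refine Finset.sum_congr rfl fun t _ => ?_
    rw [← hμ]
    ring
  have hIrew : ∀ (s : Fin (T + 1) → S) (a : Fin (T + 1) → A),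
      ∫ r : Fin (T + 1) → ℝ, (∑ t : Fin (T + 1), γ ^ (t : ℕ) * r t)
          ∂(Measure.pi fun i => PR (s i) (a i))
        = ∑ t : Fin (T + 1), γ ^ (t : ℕ) * μ (s t) (a t) := by
    intro s a
    have h1 : ∀ r : Fin (T + 1) → ℝ, (∑ t : Fin (T + 1), γ ^ (t : ℕ) * r t)
        = ∑ t : Fin (T + 1), (γ ^ (t : ℕ) * r t + 0) := by
      intro r; simp
    have hil := integral_linear_pi' (fun i => PR (s i) (a i))
      (fun i => hInt (s i) (a i)) (fun t => γ ^ (t : ℕ)) (fun _ => (0 : ℝ))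
    simp only [h1]
    rw [hil]
    refine Finset.sum_congr rfl fun t _ => ?_
    rw [← hμ]
  simp only [hIpsi, hIrew]
  simp only [Finset.mul_sum]
  conv_lhs => rw [sum_swap3]
  conv_rhs => rw [sum_swap3]
  refine Finset.sum_congr rfl fun t _ => ?_
  have hA : ∑ s : Fin (T + 1) → S, ∑ a : Fin (T + 1) → A,
      trajProb T PS0 PS πb s a * (rhoLE πe πb t s a * μ (s t) (a t))
      = ∑ s : Fin (T + 1) → S, ∑ a : Fin (T + 1) → A,
          trajProb T PS0 PS πe s a * μ (s t) (a t) := by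
    rw [expandLE T PS0 PS πe πb hPS1 hπe1 hπb1 hpos t μ,
      expandPlain T PS0 PS πe hPS1 hπe1 t μ,
      dvec_congr (Pi1 := fun k => if k ≤ (t : ℕ) then πe else πb) (Pi2 := fun _ => πe)
        (fun k hk => if_pos (Nat.le_of_lt hk))]
  have hB : ∑ s : Fin (T + 1) → S, ∑ a : Fin (T + 1) → A,
      trajProb T PS0 PS πb s a * (rhoLE πe πb t s a * q t (s t) (a t))
      = ∑ s : Fin (T + 1) → S, ∑ a : Fin (T + 1) → A,
          trajProb T PS0 PS πb s a *
            (rhoLT πe πb t s a * ∑ a' : A, πe (s t) a' * q t (s t) a') := by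
    have e2 := expandLT T PS0 PS πe πb hPS1 hπe1 hπb1 hpos t
      (fun s0 _ => ∑ a' : A, πe s0 a' * q t s0 a')
    rw [expandLE T PS0 PS πe πb hPS1 hπe1 hπb1 hpos t (q t), e2,
      dvec_congr (Pi1 := fun k => if k < (t : ℕ) then πe else πb)
        (Pi2 := fun k => if k ≤ (t : ℕ) then πe else πb)
        (fun k hk => by simp [hk, Nat.le_of_lt hk])]
    refine Finset.sum_congr rfl fun s0 _ => ?_
    rw [← Finset.mul_sum, ← Finset.mul_sum, ← Finset.sum_mul, hπb1 s0, one_mul]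
  calc ∑ s : Fin (T + 1) → S, ∑ a : Fin (T + 1) → A,
        trajProb T PS0 PS πb s a * (γ ^ (t : ℕ) *
          (rhoLE πe πb t s a * (μ (s t) (a t) - q t (s t) (a t))
            + ∑ a' : A, rhoLT πe πb t s a * (πe (s t) a' * q t (s t) a')))
      = ∑ s : Fin (T + 1) → S, ∑ a : Fin (T + 1) → A,
          γ ^ (t : ℕ) * (trajProb T PS0 PS πb s a * (rhoLE πe πb t s a * μ (s t) (a t))
            - trajProb T PS0 PS πb s a * (rhoLE πe πb t s a * q t (s t) (a t))
            + trajProb T PS0 PS πb s a *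
                (rhoLT πe πb t s a * ∑ a' : A, πe (s t) a' * q t (s t) a')) :=
        Finset.sum_congr rfl fun s _ => Finset.sum_congr rfl fun a _ => by
          rw [← Finset.mul_sum]; ring
    _ = ∑ s : Fin (T + 1) → S, ∑ a : Fin (T + 1) → A,
          γ ^ (t : ℕ) * (trajProb T PS0 PS πe s a * μ (s t) (a t)) := by
        simp only [← Finset.mul_sum]
        congr 1
        simp only [Finset.sum_sub_distrib, Finset.sum_add_distrib]
        rw [hB, sub_add_cancel]
        exact hA
    _ = ∑ s : Fin (T + 1) → S, ∑ a : Fin (T + 1) → A,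
          trajProb T PS0 PS πe s a * (γ ^ (t : ℕ) * μ (s t) (a t)) :=
        Finset.sum_congr rfl fun s _ => Finset.sum_congr rfl fun a _ => by ring
end

section
/- The doubly robust score is exactly insensitive to the plugged-in value functions when the true behavior policy is used: for any functions q̃_t : S × A → ℝ, t = 0,...,T, E_{H∼π_b}[ψ(H; π_b, {q̃_t}_{t=0}^T)] = V^{π_e}. -/
open MeasureTheory

namespace DRaux

variable {S A : Type} [Fintype S] [Fintype A]

/-- Trajectory probability with a time-dependent policy. -/
noncomputable def tdPi (T : ℕ) (PS0 : S → ℝ) (PS : S → A → S → ℝ)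
    (π : ℕ → S → A → ℝ) (s : Fin (T + 1) → S) (a : Fin (T + 1) → A) : ℝ :=
  (PS0 (s 0) * ∏ t : Fin T, PS (s t.castSucc) (a t.castSucc) (s t.succ)) *
    ∏ u : Fin (T + 1), π u.1 (s u) (a u)

noncomputable def occ (PS0 : S → ℝ) (PS : S → A → S → ℝ) (π : ℕ → S → A → ℝ) :
    ℕ → S → A → ℝ
  | 0 => fun s a => PS0 s * π 0 s a
  | n + 1 => fun s' a' => (∑ s, ∑ a, occ PS0 PS π n s a * PS s a s') * π (n + 1) s' a'

noncomputable def occS (PS0 : S → ℝ) (PS : S → A → S → ℝ) (π : ℕ → S → A → ℝ) :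
    ℕ → S → ℝ
  | 0 => PS0
  | n + 1 => fun s' => ∑ s, ∑ a, occ PS0 PS π n s a * PS s a s'

lemma occ_eq (PS0 : S → ℝ) (PS : S → A → S → ℝ) (π : ℕ → S → A → ℝ) (n : ℕ)
    (s : S) (a : A) : occ PS0 PS π n s a = occS PS0 PS π n s * π n s a := by
  cases n <;> rfl

lemma occ_congr (PS0 : S → ℝ) (PS : S → A → S → ℝ) {π π' : ℕ → S → A → ℝ} {n : ℕ}
    (h : ∀ u ≤ n, π u = π' u) : occ PS0 PS π n = occ PS0 PS π' n := by
  induction n with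
  | zero => funext s a; simp only [occ]; rw [h 0 le_rfl]
  | succ n ih =>
      funext s a
      simp only [occ]
      rw [ih fun u hu => h u (hu.trans (Nat.le_succ n)), h (n + 1) le_rfl]

lemma occS_congr (PS0 : S → ℝ) (PS : S → A → S → ℝ) {π π' : ℕ → S → A → ℝ} {n : ℕ}
    (h : ∀ u < n, π u = π' u) : occS PS0 PS π n = occS PS0 PS π' n := by
  cases n with
  | zero => rfl
  | succ n =>
      funext s'
      simp only [occS]
      rw [occ_congr PS0 PS fun u hu => h u (Nat.lt_succ_of_le hu)]

def snocEquiv (α : Type) (n : ℕ) : ((Fin n → α) × α) ≃ (Fin (n + 1) → α) where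
  toFun p := Fin.snoc p.1 p.2
  invFun f := (Fin.init f, f (Fin.last n))
  left_inv p := by
    refine Prod.ext ?_ ?_
    · funext i; simp [Fin.init]
    · simp
  right_inv f := Fin.snoc_init_self f

lemma sum_snoc {α : Type} [Fintype α] {n : ℕ} (F : (Fin (n + 1) → α) → ℝ) :
    ∑ f : Fin (n + 1) → α, F f = ∑ g : Fin n → α, ∑ x : α, F (Fin.snoc g x) := by
  rw [← (snocEquiv α n).sum_comp F, Fintype.sum_prod_type]
  rfl

lemma tdPi_snoc (T : ℕ) (PS0 : S → ℝ) (PS : S → A → S → ℝ) (π : ℕ → S → A → ℝ)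
    (s : Fin (T + 1) → S) (a : Fin (T + 1) → A) (x : S) (y : A) :
    tdPi (T + 1) PS0 PS π (Fin.snoc s x) (Fin.snoc a y) =
      tdPi T PS0 PS π s a * (PS (s (Fin.last T)) (a (Fin.last T)) x * π (T + 1) x y) := by
  unfold tdPi
  rw [Fin.prod_univ_castSucc, Fin.prod_univ_castSucc]
  have h0 : (Fin.snoc s x : Fin (T + 2) → S) 0 = s 0 := by
    rw [← Fin.castSucc_zero, Fin.snoc_castSucc]
  simp only [Fin.succ_castSucc, Fin.snoc_castSucc, Fin.succ_last, Fin.snoc_last,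
    Fin.coe_castSucc, Fin.val_last, h0]
  ring


lemma collapse (C D : ℝ) (P : S → ℝ) (Q : S → A → ℝ)
    (hP : ∑ x, P x = 1) (hQ : ∀ x, ∑ y, Q x y = 1) :
    ∑ x : S, ∑ y : A, C * (P x * Q x y) * D = C * D := by
  have h : ∀ x : S, ∑ y, C * (P x * Q x y) * D = C * D * P x := by
    intro x
    calc ∑ y, C * (P x * Q x y) * D = ∑ y, C * D * P x * Q x y :=
          Finset.sum_congr rfl fun y _ => by ring
      _ = C * D * P x * ∑ y, Q x y := by rw [Finset.mul_sum]
      _ = C * D * P x := by rw [hQ, mul_one]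
  calc ∑ x, ∑ y, C * (P x * Q x y) * D = ∑ x, C * D * P x :=
        Finset.sum_congr rfl fun x _ => h x
    _ = C * D * ∑ x, P x := by rw [Finset.mul_sum]
    _ = C * D := by rw [hP, mul_one]

lemma sum_comm4 {α β γ δ : Type} [Fintype α] [Fintype β] [Fintype γ] [Fintype δ]
    (f : α → β → γ → δ → ℝ) :
    ∑ a, ∑ b, ∑ c, ∑ d, f a b c d = ∑ c, ∑ d, ∑ a, ∑ b, f a b c d := by
  calc ∑ a, ∑ b, ∑ c, ∑ d, f a b c d
      = ∑ a, ∑ c, ∑ b, ∑ d, f a b c d :=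
        Finset.sum_congr rfl fun a _ => Finset.sum_comm
    _ = ∑ c, ∑ a, ∑ b, ∑ d, f a b c d := Finset.sum_comm
    _ = ∑ c, ∑ a, ∑ d, ∑ b, f a b c d :=
        Finset.sum_congr rfl fun c _ => Finset.sum_congr rfl fun a _ => Finset.sum_comm
    _ = ∑ c, ∑ d, ∑ a, ∑ b, f a b c d := Finset.sum_congr rfl fun c _ => Finset.sum_comm

lemma marginal (PS0 : S → ℝ) (PS : S → A → S → ℝ)
    (hPS : ∀ s a, ∑ s', PS s a s' = 1) (T : ℕ) :
    ∀ π : ℕ → S → A → ℝ, (∀ u s, ∑ a, π u s a = 1) →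
      ∀ (t : Fin (T + 1)) (f : S → A → ℝ),
      (∑ s : Fin (T + 1) → S, ∑ a : Fin (T + 1) → A,
          tdPi T PS0 PS π s a * f (s t) (a t))
        = ∑ s0 : S, ∑ a0 : A, occ PS0 PS π t.1 s0 a0 * f s0 a0 := by
  induction T with
  | zero =>
    intro π hπ t f
    have ht : t = 0 := by omega
    subst ht
    have hs : ∀ g : (Fin 1 → S) → ℝ, ∑ s : Fin 1 → S, g s = ∑ x : S, g (fun _ => x) :=
      fun g => ((Equiv.funUnique (Fin 1) S).symm.sum_comp g).symm
    have ha : ∀ g : (Fin 1 → A) → ℝ, ∑ s : Fin 1 → A, g s = ∑ x : A, g (fun _ => x) :=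
      fun g => ((Equiv.funUnique (Fin 1) A).symm.sum_comp g).symm
    rw [hs]
    refine Finset.sum_congr rfl fun x _ => ?_
    rw [ha]
    refine Finset.sum_congr rfl fun y _ => ?_
    simp only [tdPi, occ, Fin.prod_univ_zero, Fin.prod_univ_one, mul_one]
    norm_num
  | succ T ih =>
    intro π hπ t f
    rw [sum_snoc (fun s : Fin (T + 2) → S => ∑ a : Fin (T + 2) → A,
      tdPi (T + 1) PS0 PS π s a * f (s t) (a t))]
    have hsplit : ∀ (s : Fin (T + 1) → S) (x : S),
        (∑ a : Fin (T + 2) → A,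
          tdPi (T + 1) PS0 PS π (Fin.snoc s x) a * f ((Fin.snoc s x : Fin (T + 2) → S) t) (a t))
        = ∑ b : Fin (T + 1) → A, ∑ y : A,
            tdPi T PS0 PS π s b * (PS (s (Fin.last T)) (b (Fin.last T)) x * π (T + 1) x y)
              * f ((Fin.snoc s x : Fin (T + 2) → S) t) ((Fin.snoc b y : Fin (T + 2) → A) t) := by
      intro s x
      rw [sum_snoc (fun a : Fin (T + 2) → A =>
        tdPi (T + 1) PS0 PS π (Fin.snoc s x) a * f ((Fin.snoc s x : Fin (T + 2) → S) t) (a t))]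
      exact Finset.sum_congr rfl fun b _ => Finset.sum_congr rfl fun y _ => by
        rw [tdPi_snoc]
    simp only [hsplit]
    cases t using Fin.lastCases with
    | last =>
      simp only [Fin.snoc_last]
      set g : S → A → ℝ := fun s0 a0 => ∑ x : S, ∑ y : A,
        PS s0 a0 x * (π (T + 1) x y * f x y) with hg
      have hinner : ∀ (s : Fin (T + 1) → S) (x : S),
          (∑ b : Fin (T + 1) → A, ∑ y : A,
            tdPi T PS0 PS π s b * (PS (s (Fin.last T)) (b (Fin.last T)) x * π (T + 1) x y)
              * f x y) = ∑ b : Fin (T + 1) → A,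
                tdPi T PS0 PS π s b * ∑ y : A,
                  PS (s (Fin.last T)) (b (Fin.last T)) x * (π (T + 1) x y * f x y) := by
        intro s x
        refine Finset.sum_congr rfl fun b _ => ?_
        rw [Finset.mul_sum]
        exact Finset.sum_congr rfl fun y _ => by ring
      simp only [hinner]
      have hswap : ∀ s : Fin (T + 1) → S,
          (∑ x : S, ∑ b : Fin (T + 1) → A, tdPi T PS0 PS π s b * ∑ y : A,
            PS (s (Fin.last T)) (b (Fin.last T)) x * (π (T + 1) x y * f x y))
          = ∑ b : Fin (T + 1) → A, tdPi T PS0 PS π s b *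
              g (s (Fin.last T)) (b (Fin.last T)) := by
        intro s
        rw [Finset.sum_comm]
        refine Finset.sum_congr rfl fun b _ => ?_
        rw [hg, ← Finset.mul_sum]
      simp only [hswap]
      rw [ih π hπ (Fin.last T) g]
      have hoccval : ∀ s0 a0, occ PS0 PS π (Fin.last T).1 s0 a0 = occ PS0 PS π T s0 a0 := by
        simp [Fin.val_last]
      simp only [hoccval]
      calc ∑ s0 : S, ∑ a0 : A, occ PS0 PS π T s0 a0 * g s0 a0
          = ∑ s0 : S, ∑ a0 : A, ∑ x : S, ∑ y : A,
              occ PS0 PS π T s0 a0 * PS s0 a0 x * π (T + 1) x y * f x y := by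
            refine Finset.sum_congr rfl fun s0 _ => Finset.sum_congr rfl fun a0 _ => ?_
            rw [hg, Finset.mul_sum]
            refine Finset.sum_congr rfl fun x _ => ?_
            rw [Finset.mul_sum]
            exact Finset.sum_congr rfl fun y _ => by ring
        _ = ∑ x : S, ∑ y : A, ∑ s0 : S, ∑ a0 : A,
              occ PS0 PS π T s0 a0 * PS s0 a0 x * π (T + 1) x y * f x y := sum_comm4 _
        _ = ∑ x : S, ∑ y : A, occ PS0 PS π (Fin.last (T + 1)).1 x y * f x y := by
            refine Finset.sum_congr rfl fun x _ => Finset.sum_congr rfl fun y _ => ?_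
            simp only [Fin.val_last, occ]
            simp only [Finset.sum_mul]
    | cast t' =>
      simp only [Fin.snoc_castSucc]
      have hinner : ∀ (s : Fin (T + 1) → S) (x : S),
          (∑ b : Fin (T + 1) → A, ∑ y : A,
            tdPi T PS0 PS π s b * (PS (s (Fin.last T)) (b (Fin.last T)) x * π (T + 1) x y)
              * f (s t') (b t')) = ∑ b : Fin (T + 1) → A, ∑ y : A,
            tdPi T PS0 PS π s b * (PS (s (Fin.last T)) (b (Fin.last T)) x * π (T + 1) x y)
              * f (s t') (b t') := fun _ _ => rfl
      have hcol : ∀ s : Fin (T + 1) → S,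
          (∑ x : S, ∑ b : Fin (T + 1) → A, ∑ y : A,
            tdPi T PS0 PS π s b * (PS (s (Fin.last T)) (b (Fin.last T)) x * π (T + 1) x y)
              * f (s t') (b t'))
          = ∑ b : Fin (T + 1) → A, tdPi T PS0 PS π s b * f (s t') (b t') := by
        intro s
        rw [Finset.sum_comm]
        refine Finset.sum_congr rfl fun b _ => ?_
        exact collapse _ _ _ _ (hPS _ _) (hπ (T + 1))
      simp only [hcol]
      rw [ih π hπ t' f]
      simp [Fin.coe_castSucc]


def mixLE (πe πb : S → A → ℝ) (t : ℕ) : ℕ → S → A → ℝ := fun u => if u ≤ t then πe else πb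
def mixLT (πe πb : S → A → ℝ) (t : ℕ) : ℕ → S → A → ℝ := fun u => if u < t then πe else πb

lemma trajProb_eq (T : ℕ) (PS0 : S → ℝ) (PS : S → A → S → ℝ) (π : S → A → ℝ)
    (s : Fin (T + 1) → S) (a : Fin (T + 1) → A) :
    trajProb T PS0 PS π s a =
      (PS0 (s 0) * ∏ t : Fin T, PS (s t.castSucc) (a t.castSucc) (s t.succ)) *
        ∏ u : Fin (T + 1), π (s u) (a u) := by
  unfold trajProb
  rw [Finset.prod_mul_distrib, Fin.prod_univ_succ (f := fun u : Fin (T + 1) => π (s u) (a u))]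
  ring

lemma trajProb_eq_tdPi (T : ℕ) (PS0 : S → ℝ) (PS : S → A → S → ℝ) (π : S → A → ℝ)
    (s : Fin (T + 1) → S) (a : Fin (T + 1) → A) :
    trajProb T PS0 PS π s a = tdPi T PS0 PS (fun _ => π) s a := trajProb_eq ..

lemma prod_mix {T : ℕ} (πe πb : S → A → ℝ) (hb : ∀ s a, πb s a ≠ 0)
    (I : Finset (Fin (T + 1))) (p : ℕ → Prop) [DecidablePred p]
    (hp : ∀ u : Fin (T + 1), u ∈ I ↔ p u.1)
    (s : Fin (T + 1) → S) (a : Fin (T + 1) → A) :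
    (∏ u : Fin (T + 1), πb (s u) (a u)) * ∏ u ∈ I, πe (s u) (a u) / πb (s u) (a u)
      = ∏ u : Fin (T + 1), (if p u.1 then πe else πb) (s u) (a u) := by
  rw [← Finset.prod_mul_prod_compl I (fun u => πb (s u) (a u))]
  have h1 : (∏ u ∈ I, πb (s u) (a u)) * (∏ u ∈ Iᶜ, πb (s u) (a u)) *
        ∏ u ∈ I, πe (s u) (a u) / πb (s u) (a u)
      = ((∏ u ∈ I, πb (s u) (a u)) * ∏ u ∈ I, πe (s u) (a u) / πb (s u) (a u)) *
        ∏ u ∈ Iᶜ, πb (s u) (a u) := by ring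
  rw [h1, ← Finset.prod_mul_distrib]
  have h2 : ∀ u ∈ I, πb (s u) (a u) * (πe (s u) (a u) / πb (s u) (a u)) = πe (s u) (a u) := by
    intro u _
    rw [mul_comm, div_mul_cancel₀ _ (hb _ _)]
  rw [Finset.prod_congr rfl h2]
  rw [← Finset.prod_mul_prod_compl I (fun u => (if p u.1 then πe else πb) (s u) (a u))]
  congr 1
  · exact Finset.prod_congr rfl fun u hu => by rw [if_pos ((hp u).mp hu)]
  · exact Finset.prod_congr rfl fun u hu => by
      rw [if_neg (fun hc => (Finset.mem_compl.mp hu) ((hp u).mpr hc))]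

lemma trajProb_mul_rhoLE {T : ℕ} (PS0 : S → ℝ) (PS : S → A → S → ℝ)
    (πe πb : S → A → ℝ) (hb : ∀ s a, πb s a ≠ 0) (t : Fin (T + 1))
    (s : Fin (T + 1) → S) (a : Fin (T + 1) → A) :
    trajProb T PS0 PS πb s a * rhoLE πe πb t s a
      = tdPi T PS0 PS (mixLE πe πb t.1) s a := by
  rw [trajProb_eq, mul_assoc]
  unfold rhoLE tdPi mixLE
  rw [prod_mix πe πb hb (Finset.Iic t) (fun u => u ≤ t.1)
    (fun u => by rw [Finset.mem_Iic, Fin.le_def]) s a]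

lemma trajProb_mul_rhoLT {T : ℕ} (PS0 : S → ℝ) (PS : S → A → S → ℝ)
    (πe πb : S → A → ℝ) (hb : ∀ s a, πb s a ≠ 0) (t : Fin (T + 1))
    (s : Fin (T + 1) → S) (a : Fin (T + 1) → A) :
    trajProb T PS0 PS πb s a * rhoLT πe πb t s a
      = tdPi T PS0 PS (mixLT πe πb t.1) s a := by
  rw [trajProb_eq, mul_assoc]
  unfold rhoLT tdPi mixLT
  rw [prod_mix πe πb hb (Finset.Iio t) (fun u => u < t.1)
    (fun u => by rw [Finset.mem_Iio, Fin.lt_def]) s a]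

lemma map_eval_pi {n : ℕ} (ν : Fin (n + 1) → Measure ℝ) [∀ i, IsProbabilityMeasure (ν i)]
    (t : Fin (n + 1)) : (Measure.pi ν).map (fun r => r t) = ν t := by
  have mp := measurePreserving_piFinSuccAbove ν t
  have he : (fun r : Fin (n + 1) → ℝ => r t)
      = Prod.fst ∘ (MeasurableEquiv.piFinSuccAbove (fun _ => ℝ) t) := rfl
  rw [he, ← Measure.map_map measurable_fst
    (MeasurableEquiv.piFinSuccAbove (fun _ => ℝ) t).measurable, mp.map_eq,
    Measure.map_fst_prod]
  simp

lemma integrable_eval {n : ℕ} (ν : Fin (n + 1) → Measure ℝ) [∀ i, IsProbabilityMeasure (ν i)]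
    (t : Fin (n + 1)) (h : Integrable (fun x : ℝ => x) (ν t)) :
    Integrable (fun r : Fin (n + 1) → ℝ => r t) (Measure.pi ν) := by
  rw [← map_eval_pi ν t] at h
  have hg : AEStronglyMeasurable (fun x : ℝ => x) ((Measure.pi ν).map fun r => r t) :=
    aestronglyMeasurable_id
  rw [integrable_map_measure hg (measurable_pi_apply t).aemeasurable] at h
  exact h

lemma integral_eval {n : ℕ} (ν : Fin (n + 1) → Measure ℝ) [∀ i, IsProbabilityMeasure (ν i)]
    (t : Fin (n + 1)) :
    ∫ r : Fin (n + 1) → ℝ, r t ∂(Measure.pi ν) = ∫ x, x ∂(ν t) := by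
  conv_rhs => rw [← map_eval_pi ν t]
  have hg : AEStronglyMeasurable (fun x : ℝ => x) ((Measure.pi ν).map fun r => r t) :=
    aestronglyMeasurable_id
  rw [integral_map (measurable_pi_apply t).aemeasurable hg]

lemma integral_affine {n : ℕ} (ν : Fin (n + 1) → Measure ℝ) [∀ i, IsProbabilityMeasure (ν i)]
    (hInt : ∀ i, Integrable (fun x : ℝ => x) (ν i)) (t : Fin (n + 1)) (c d : ℝ) :
    ∫ r : Fin (n + 1) → ℝ, (c * r t + d) ∂(Measure.pi ν) = c * (∫ x, x ∂(ν t)) + d := by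
  rw [integral_add ((integrable_eval ν t (hInt t)).const_mul c) (integrable_const d),
    integral_const_mul, integral_eval, integral_const]
  simp


end DRaux

/-- the doubly robust score is exactly insensitive to the plugged-in value
functions when the true behavior policy is used: for any `q̃_t : S × A → ℝ`, `t = 0,...,T`,
`E_{H∼πb}[ψ(H; πb, {q̃_t})] = V^{πe} = E_{H∼πe}[∑_t γ^t R_t]`. -/
theorem doubly_robust_score_unbiased_any_q
    {S A : Type} [Fintype S] [Fintype A]
    (T : ℕ) (PS0 : S → ℝ) (PS : S → A → S → ℝ) (PR : S → A → Measure ℝ)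
    [∀ s a, IsProbabilityMeasure (PR s a)]
    (hInt : ∀ s a, MeasureTheory.Integrable (fun x : ℝ => x) (PR s a))
    (πb πe : S → A → ℝ) (γ : ℝ)
    (hPS0 : IsInitDist PS0) (hPS : IsTransKernel PS)
    (hπb : IsPolicy πb) (hπe : IsPolicy πe)
    (hpos : ∀ s a, 0 < πb s a)
    (hγ0 : 0 ≤ γ) (hγ1 : γ ≤ 1)
    (qt : Fin (T + 1) → S → A → ℝ) :
    trajExp T PS0 PS PR πb (psiDR πe πb γ qt)
      = trajExp T PS0 PS PR πe (fun _ _ r => ∑ t : Fin (T + 1), γ ^ (t : ℕ) * r t) := by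
  classical
  have hPS' : ∀ s a, ∑ s', PS s a s' = 1 := fun s a => (hPS s a).2
  have hb0 : ∀ s a, πb s a ≠ 0 := fun s a => ne_of_gt (hpos s a)
  have hbpol : ∀ s, ∑ a, πb s a = 1 := fun s => (hπb s).2
  have hepol : ∀ s, ∑ a, πe s a = 1 := fun s => (hπe s).2
  have hmixLEpol : ∀ tn : ℕ, ∀ (u : ℕ) (s : S), ∑ a, DRaux.mixLE πe πb tn u s a = 1 := by
    intro tn u s
    unfold DRaux.mixLE
    split_ifs with h
    · exact hepol s
    · exact hbpol s
  have hmixLTpol : ∀ tn : ℕ, ∀ (u : ℕ) (s : S), ∑ a, DRaux.mixLT πe πb tn u s a = 1 := by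
    intro tn u s
    unfold DRaux.mixLT
    split_ifs with h
    · exact hepol s
    · exact hbpol s
  have hepolN : ∀ (u : ℕ) (s : S), ∑ a, (fun _ : ℕ => πe) u s a = 1 := fun _ s => hepol s
  -- Step 1: compute the reward integrals
  have hψint : ∀ (s : Fin (T + 1) → S) (a : Fin (T + 1) → A),
      (∫ r : Fin (T + 1) → ℝ, psiDR πe πb γ qt s a r
          ∂(Measure.pi fun t' => PR (s t') (a t')))
        = ∑ t : Fin (T + 1),
            ((γ ^ (t : ℕ) * rhoLE πe πb t s a) * (∫ x, x ∂PR (s t) (a t))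
              + γ ^ (t : ℕ) * (rhoLT πe πb t s a * (∑ a' : A, πe (s t) a' * qt t (s t) a')
                  - rhoLE πe πb t s a * qt t (s t) (a t))) := by
    intro s a
    have h1 : (fun r : Fin (T + 1) → ℝ => psiDR πe πb γ qt s a r)
        = fun r => ∑ t : Fin (T + 1),
            ((γ ^ (t : ℕ) * rhoLE πe πb t s a) * r t
              + γ ^ (t : ℕ) * (rhoLT πe πb t s a * (∑ a' : A, πe (s t) a' * qt t (s t) a')
                  - rhoLE πe πb t s a * qt t (s t) (a t))) := by
      funext r
      unfold psiDR
      exact Finset.sum_congr rfl fun t _ => by ring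
    have hint2 : ∀ t : Fin (T + 1),
        Integrable (fun r : Fin (T + 1) → ℝ =>
          (γ ^ (t : ℕ) * rhoLE πe πb t s a) * r t
            + γ ^ (t : ℕ) * (rhoLT πe πb t s a * (∑ a' : A, πe (s t) a' * qt t (s t) a')
                - rhoLE πe πb t s a * qt t (s t) (a t)))
          (Measure.pi fun t' => PR (s t') (a t')) := fun t =>
      ((DRaux.integrable_eval _ t (hInt _ _)).const_mul _).add (integrable_const _)
    rw [h1, integral_finset_sum _ (fun t _ => hint2 t)]
    refine Finset.sum_congr rfl fun t _ => ?_
    rw [DRaux.integral_affine _ (fun i => hInt _ _) t]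
  have hRint : ∀ (s : Fin (T + 1) → S) (a : Fin (T + 1) → A),
      (∫ r : Fin (T + 1) → ℝ, (∑ t : Fin (T + 1), γ ^ (t : ℕ) * r t)
          ∂(Measure.pi fun t' => PR (s t') (a t')))
        = ∑ t : Fin (T + 1), γ ^ (t : ℕ) * (∫ x, x ∂PR (s t) (a t)) := by
    intro s a
    have hint2 : ∀ t : Fin (T + 1),
        Integrable (fun r : Fin (T + 1) → ℝ => γ ^ (t : ℕ) * r t)
          (Measure.pi fun t' => PR (s t') (a t')) := fun t =>
      (DRaux.integrable_eval _ t (hInt _ _)).const_mul _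
    rw [integral_finset_sum _ (fun t _ => hint2 t)]
    refine Finset.sum_congr rfl fun t _ => ?_
    rw [integral_const_mul, DRaux.integral_eval]
  unfold trajExp
  simp only [hψint, hRint]
  -- marginalization consequences
  have hLE : ∀ (t : Fin (T + 1)) (f : S → A → ℝ),
      (∑ s : Fin (T + 1) → S, ∑ a : Fin (T + 1) → A,
        trajProb T PS0 PS πb s a * rhoLE πe πb t s a * f (s t) (a t))
        = ∑ s0 : S, ∑ a0 : A, DRaux.occ PS0 PS (fun _ => πe) t.1 s0 a0 * f s0 a0 := by
    intro t f
    have h1 : ∀ (s : Fin (T + 1) → S) (a : Fin (T + 1) → A),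
        trajProb T PS0 PS πb s a * rhoLE πe πb t s a * f (s t) (a t)
          = DRaux.tdPi T PS0 PS (DRaux.mixLE πe πb t.1) s a * f (s t) (a t) := fun s a => by
      rw [DRaux.trajProb_mul_rhoLE PS0 PS πe πb hb0 t]
    simp_rw [h1]
    rw [DRaux.marginal PS0 PS hPS' T _ (hmixLEpol t.1) t f,
      DRaux.occ_congr PS0 PS (π := DRaux.mixLE πe πb t.1) (π' := fun _ => πe)
        (fun u hu => by simp [DRaux.mixLE, hu])]
  have hLT : ∀ (t : Fin (T + 1)) (g : S → ℝ),
      (∑ s : Fin (T + 1) → S, ∑ a : Fin (T + 1) → A,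
        trajProb T PS0 PS πb s a * rhoLT πe πb t s a * g (s t))
        = ∑ s0 : S, DRaux.occS PS0 PS (fun _ => πe) t.1 s0 * g s0 := by
    intro t g
    have h1 : ∀ (s : Fin (T + 1) → S) (a : Fin (T + 1) → A),
        trajProb T PS0 PS πb s a * rhoLT πe πb t s a * g (s t)
          = DRaux.tdPi T PS0 PS (DRaux.mixLT πe πb t.1) s a
              * (fun s0 (_ : A) => g s0) (s t) (a t) := fun s a => by
      rw [DRaux.trajProb_mul_rhoLT PS0 PS πe πb hb0 t]
    simp_rw [h1]
    rw [DRaux.marginal PS0 PS hPS' T _ (hmixLTpol t.1) t (fun s0 _ => g s0)]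
    refine Finset.sum_congr rfl fun s0 _ => ?_
    have h2 : ∀ a0 : A, DRaux.occ PS0 PS (DRaux.mixLT πe πb t.1) t.1 s0 a0
        = DRaux.occS PS0 PS (fun _ => πe) t.1 s0 * πb s0 a0 := by
      intro a0
      rw [DRaux.occ_eq, DRaux.occS_congr PS0 PS (π := DRaux.mixLT πe πb t.1)
        (π' := fun _ => πe) (fun u hu => by simp [DRaux.mixLT, hu])]
      have : DRaux.mixLT πe πb t.1 t.1 = πb := by simp [DRaux.mixLT]
      rw [this]
    show (∑ a0 : A, DRaux.occ PS0 PS (DRaux.mixLT πe πb t.1) t.1 s0 a0 * g s0)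
        = DRaux.occS PS0 PS (fun _ => πe) t.1 s0 * g s0
    calc (∑ a0 : A, DRaux.occ PS0 PS (DRaux.mixLT πe πb t.1) t.1 s0 a0 * g s0)
        = ∑ a0 : A, DRaux.occS PS0 PS (fun _ => πe) t.1 s0 * g s0 * πb s0 a0 :=
          Finset.sum_congr rfl fun a0 _ => by rw [h2 a0]; ring
      _ = DRaux.occS PS0 PS (fun _ => πe) t.1 s0 * g s0 * ∑ a0 : A, πb s0 a0 := by
          rw [Finset.mul_sum]
      _ = _ := by rw [hbpol s0, mul_one]
  have hE : ∀ (t : Fin (T + 1)) (f : S → A → ℝ),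
      (∑ s : Fin (T + 1) → S, ∑ a : Fin (T + 1) → A,
        trajProb T PS0 PS πe s a * f (s t) (a t))
        = ∑ s0 : S, ∑ a0 : A, DRaux.occ PS0 PS (fun _ => πe) t.1 s0 a0 * f s0 a0 := by
    intro t f
    simp_rw [DRaux.trajProb_eq_tdPi T PS0 PS πe]
    exact DRaux.marginal PS0 PS hPS' T _ hepolN t f
  have hq2 : ∀ t : Fin (T + 1),
      (∑ s0 : S, ∑ a0 : A, DRaux.occ PS0 PS (fun _ => πe) t.1 s0 a0 * qt t s0 a0)
        = ∑ s0 : S, DRaux.occS PS0 PS (fun _ => πe) t.1 s0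
            * ∑ a' : A, πe s0 a' * qt t s0 a' := by
    intro t
    refine Finset.sum_congr rfl fun s0 _ => ?_
    rw [Finset.mul_sum]
    exact Finset.sum_congr rfl fun a0 _ => by rw [DRaux.occ_eq]; ring
  -- Step 2: swap sums and conclude
  have swap3 : ∀ F : (Fin (T + 1) → S) → (Fin (T + 1) → A) → Fin (T + 1) → ℝ,
      (∑ s : Fin (T + 1) → S, ∑ a : Fin (T + 1) → A, ∑ t : Fin (T + 1), F s a t)
        = ∑ t : Fin (T + 1), ∑ s : Fin (T + 1) → S, ∑ a : Fin (T + 1) → A, F s a t := by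
    intro F
    calc (∑ s : Fin (T + 1) → S, ∑ a : Fin (T + 1) → A, ∑ t : Fin (T + 1), F s a t)
        = ∑ s : Fin (T + 1) → S, ∑ t : Fin (T + 1), ∑ a : Fin (T + 1) → A, F s a t :=
          Finset.sum_congr rfl fun s _ => Finset.sum_comm
      _ = _ := Finset.sum_comm
  have swapmul : ∀ (p : (Fin (T + 1) → S) → (Fin (T + 1) → A) → ℝ)
      (F : (Fin (T + 1) → S) → (Fin (T + 1) → A) → Fin (T + 1) → ℝ),
      (∑ s : Fin (T + 1) → S, ∑ a : Fin (T + 1) → A, p s a * ∑ t : Fin (T + 1), F s a t)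
        = ∑ t : Fin (T + 1), ∑ s : Fin (T + 1) → S, ∑ a : Fin (T + 1) → A,
            p s a * F s a t := by
    intro p F
    have h : ∀ s a, p s a * ∑ t : Fin (T + 1), F s a t
        = ∑ t : Fin (T + 1), p s a * F s a t := fun s a => Finset.mul_sum _ _ _
    simp_rw [h]
    exact swap3 _
  rw [swapmul, swapmul]
  refine Finset.sum_congr rfl fun t _ => ?_
  have hLEμ := hLE t (fun s0 a0 => ∫ x, x ∂PR s0 a0)
  have hLTV := hLT t (fun s0 => ∑ a' : A, πe s0 a' * qt t s0 a')
  have hLEq := hLE t (qt t)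
  have hEμ := hE t (fun s0 a0 => ∫ x, x ∂PR s0 a0)
  have e1 : ∀ (s : Fin (T + 1) → S) (a : Fin (T + 1) → A),
      trajProb T PS0 PS πb s a *
          ((γ ^ (t : ℕ) * rhoLE πe πb t s a) * (∫ x, x ∂PR (s t) (a t))
            + γ ^ (t : ℕ) * (rhoLT πe πb t s a * (∑ a' : A, πe (s t) a' * qt t (s t) a')
                - rhoLE πe πb t s a * qt t (s t) (a t)))
        = γ ^ (t : ℕ) * (trajProb T PS0 PS πb s a * rhoLE πe πb t s a
              * (∫ x, x ∂PR (s t) (a t)))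
          + (γ ^ (t : ℕ) * (trajProb T PS0 PS πb s a * rhoLT πe πb t s a
              * (∑ a' : A, πe (s t) a' * qt t (s t) a'))
            - γ ^ (t : ℕ) * (trajProb T PS0 PS πb s a * rhoLE πe πb t s a
              * qt t (s t) (a t))) := fun s a => by ring
  have e2 : ∀ (s : Fin (T + 1) → S) (a : Fin (T + 1) → A),
      trajProb T PS0 PS πe s a * (γ ^ (t : ℕ) * (∫ x, x ∂PR (s t) (a t)))
        = γ ^ (t : ℕ) * (trajProb T PS0 PS πe s a
            * (∫ x, x ∂PR (s t) (a t))) := fun s a => by ring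
  simp_rw [e1, e2]
  simp only [Finset.sum_add_distrib, Finset.sum_sub_distrib, ← Finset.mul_sum]
  rw [hLEμ, hLTV, hLEq, hq2 t, hEμ]
  ring
end

section
/- Neyman orthogonality of the doubly robust score: for the true nuisance tuple η = (π_b, {q_t^{π_e}}_{t=0}^T) and any candidate tuple η̃ = (π̃_b, {q̃_t}_{t=0}^T) where π̃_b : S × A → ℝ and q̃_t : S × A → ℝ, the function r ↦ E_{H∼π_b}[ψ(H; η + r(η̃ − η))] is differentiable at r = 0 with derivative equal to 0. -/
open MeasureTheory

section NeymanAux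
set_option linter.unusedSectionVars false

namespace Neyman

open Finset

variable {S A : Type} [Fintype S] [Fintype A]

/-- Forward recursion for the mass of trajectories ending at `(s,a)`,
weighted by per-step factors `c`. -/
noncomputable def M (PS0 : S → ℝ) (PS : S → A → S → ℝ) (pb : S → A → ℝ)
    (c : ℕ → S → A → ℝ) : ℕ → S → A → ℝ
  | 0 => fun s a => PS0 s * pb s a * c 0 s a
  | (k + 1) => fun s' a' =>
      (∑ s, ∑ a, M PS0 PS pb c k s a * PS s a s') * pb s' a' * c (k + 1) s' a'

theorem trajProb_snoc (n : ℕ) (PS0 : S → ℝ) (PS : S → A → S → ℝ) (pb : S → A → ℝ)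
    (s : Fin (n + 1) → S) (a : Fin (n + 1) → A) (x : S) (y : A) :
    trajProb (n + 1) PS0 PS pb (Fin.snoc s x) (Fin.snoc a y)
      = trajProb n PS0 PS pb s a * (PS (s (Fin.last n)) (a (Fin.last n)) x * pb x y) := by
  unfold trajProb
  rw [Fin.prod_univ_castSucc]
  have h0 : (0 : Fin (n + 2)) = Fin.castSucc 0 := rfl
  simp only [h0, Fin.snoc_castSucc, Fin.succ_castSucc, Fin.snoc_last, Fin.succ_last]
  ring

theorem sum_traj (PS0 : S → ℝ) (PS : S → A → S → ℝ) (pb : S → A → ℝ)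
    (c : ℕ → S → A → ℝ) :
    ∀ (n : ℕ) (φ : S → A → ℝ),
    (∑ s : Fin (n + 1) → S, ∑ a : Fin (n + 1) → A,
      trajProb n PS0 PS pb s a *
        ((∏ t : Fin (n + 1), c (t : ℕ) (s t) (a t)) * φ (s (Fin.last n)) (a (Fin.last n))))
    = ∑ s0, ∑ a0, M PS0 PS pb c n s0 a0 * φ s0 a0 := by
  intro n
  induction n with
  | zero =>
    intro φ
    rw [← Equiv.sum_comp (Equiv.funUnique (Fin 1) S).symm]
    refine Finset.sum_congr rfl fun x _ => ?_
    rw [← Equiv.sum_comp (Equiv.funUnique (Fin 1) A).symm]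
    refine Finset.sum_congr rfl fun y _ => ?_
    simp [trajProb, M, Fin.last]
    ring
  | succ n ih =>
    intro φ
    rw [← Equiv.sum_comp (Fin.snocEquiv (fun _ => S)), Fintype.sum_prod_type]
    simp only [show ∀ (x : S) (s : Fin (n + 1) → S),
        (Fin.snocEquiv fun _ => S) (x, s) = Fin.snoc s x from fun _ _ => rfl]
    have ha : ∀ (x : S) (s : Fin (n + 1) → S),
        (∑ a' : Fin (n + 2) → A, trajProb (n + 1) PS0 PS pb (Fin.snoc s x) a' *
          ((∏ t : Fin (n + 2), c (t : ℕ) ((Fin.snoc s x : Fin (n + 2) → S) t) (a' t)) *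
            φ ((Fin.snoc s x : Fin (n + 2) → S) (Fin.last (n + 1))) (a' (Fin.last (n + 1)))))
        = ∑ y : A, ∑ a : Fin (n + 1) → A,
            trajProb n PS0 PS pb s a *
              ((∏ t : Fin (n + 1), c (t : ℕ) (s t) (a t)) *
                (PS (s (Fin.last n)) (a (Fin.last n)) x *
                  (pb x y * (c (n + 1) x y * φ x y)))) := by
      intro x s
      rw [← Equiv.sum_comp (Fin.snocEquiv (fun _ => A)), Fintype.sum_prod_type]
      simp only [show ∀ (y : A) (a : Fin (n + 1) → A),
          (Fin.snocEquiv fun _ => A) (y, a) = Fin.snoc a y from fun _ _ => rfl]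
      refine Finset.sum_congr rfl fun y _ => Finset.sum_congr rfl fun a _ => ?_
      rw [trajProb_snoc, Fin.prod_univ_castSucc]
      simp only [Fin.snoc_castSucc, Fin.snoc_last, Fin.coe_castSucc, Fin.val_last]
      ring
    refine Finset.sum_congr rfl fun x _ => ?_
    rw [Finset.sum_congr rfl fun s _ => ha x s]
    rw [Finset.sum_comm]
    refine Finset.sum_congr rfl fun y _ => ?_
    have := ih (fun s0 a0 => PS s0 a0 x * (pb x y * (c (n + 1) x y * φ x y)))
    rw [this]
    have hM : M PS0 PS pb c (n + 1) x y
        = (∑ s0, ∑ a0, M PS0 PS pb c n s0 a0 * PS s0 a0 x) * pb x y * c (n + 1) x y := rfl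
    rw [hM, Finset.sum_mul, Finset.sum_mul, Finset.sum_mul]
    refine Finset.sum_congr rfl fun s0 _ => ?_
    rw [Finset.sum_mul, Finset.sum_mul, Finset.sum_mul]
    refine Finset.sum_congr rfl fun a0 _ => ?_
    ring

/-- Forward state-occupancy recursion weighted by `rat`. -/
noncomputable def nu (PS0 : S → ℝ) (PS : S → A → S → ℝ) (pb rat : S → A → ℝ) :
    ℕ → S → ℝ
  | 0 => PS0
  | (k + 1) => fun s' => ∑ s, ∑ a, nu PS0 PS pb rat k s * pb s a * rat s a * PS s a s'

def cseq (rat f : S → A → ℝ) (t : ℕ) : ℕ → S → A → ℝ := fun k =>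
  if k < t then rat else if k = t then f else fun _ _ => 1

omit [Fintype S] [Fintype A] in
theorem cseq_lt {rat f : S → A → ℝ} {t k : ℕ} (h : k < t) : cseq rat f t k = rat := by
  simp [cseq, h]

omit [Fintype S] [Fintype A] in
theorem cseq_eq {rat f : S → A → ℝ} {t : ℕ} : cseq rat f t t = f := by
  simp [cseq]

omit [Fintype S] [Fintype A] in
theorem cseq_gt {rat f : S → A → ℝ} {t k : ℕ} (h : t < k) :
    cseq rat f t k = fun _ _ => 1 := by
  have h1 : ¬ k < t := by omega
  have h2 : ¬ k = t := by omega
  simp [cseq, h1, h2]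

theorem M_cseq_lt (PS0 : S → ℝ) (PS : S → A → S → ℝ) (pb rat f : S → A → ℝ) (t : ℕ) :
    ∀ k, k < t → ∀ s a,
      M PS0 PS pb (cseq rat f t) k s a = nu PS0 PS pb rat k s * pb s a * rat s a := by
  intro k
  induction k with
  | zero =>
    intro h s a
    show PS0 s * pb s a * cseq rat f t 0 s a = _
    rw [cseq_lt h]
    rfl
  | succ k ih =>
    intro h s' a'
    have hk : k < t := Nat.lt_of_succ_lt h
    show (∑ s, ∑ a, M PS0 PS pb (cseq rat f t) k s a * PS s a s') * pb s' a' *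
        cseq rat f t (k + 1) s' a' = _
    rw [cseq_lt h]
    have : (∑ s, ∑ a, M PS0 PS pb (cseq rat f t) k s a * PS s a s')
        = nu PS0 PS pb rat (k + 1) s' := by
      refine Finset.sum_congr rfl fun s _ => Finset.sum_congr rfl fun a _ => ?_
      rw [ih hk]
    rw [this]

theorem M_cseq_eq (PS0 : S → ℝ) (PS : S → A → S → ℝ) (pb rat f : S → A → ℝ) (t : ℕ)
    (s : S) (a : A) :
    M PS0 PS pb (cseq rat f t) t s a = nu PS0 PS pb rat t s * pb s a * f s a := by
  cases t with
  | zero =>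
    show PS0 s * pb s a * cseq rat f 0 0 s a = _
    rw [cseq_eq]
    rfl
  | succ m =>
    show (∑ s', ∑ a', M PS0 PS pb (cseq rat f (m + 1)) m s' a' * PS s' a' s) * pb s a *
        cseq rat f (m + 1) (m + 1) s a = _
    rw [cseq_eq]
    have : (∑ s', ∑ a', M PS0 PS pb (cseq rat f (m + 1)) m s' a' * PS s' a' s)
        = nu PS0 PS pb rat (m + 1) s := by
      refine Finset.sum_congr rfl fun s' _ => Finset.sum_congr rfl fun a' _ => ?_
      rw [M_cseq_lt PS0 PS pb rat f (m + 1) m (Nat.lt_succ_self m)]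
    rw [this]

theorem sum_M_one (PS0 : S → ℝ) (PS : S → A → S → ℝ) (pb : S → A → ℝ)
    (hPS : ∀ s a, ∑ s', PS s a s' = 1) (hpb : ∀ s, ∑ a, pb s a = 1)
    (c : ℕ → S → A → ℝ) (k : ℕ) (hc : c (k + 1) = fun _ _ => 1) :
    ∑ s', ∑ a', M PS0 PS pb c (k + 1) s' a' = ∑ s, ∑ a, M PS0 PS pb c k s a := by
  have h1 : ∀ s', ∑ a', M PS0 PS pb c (k + 1) s' a'
      = ∑ s, ∑ a, M PS0 PS pb c k s a * PS s a s' := by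
    intro s'
    have : ∀ a', M PS0 PS pb c (k + 1) s' a'
        = (∑ s, ∑ a, M PS0 PS pb c k s a * PS s a s') * pb s' a' := by
      intro a'
      show (∑ s, ∑ a, M PS0 PS pb c k s a * PS s a s') * pb s' a' * c (k + 1) s' a' = _
      rw [hc]
      ring
    rw [Finset.sum_congr rfl fun a' _ => this a', ← Finset.mul_sum, hpb s', mul_one]
  rw [Finset.sum_congr rfl fun s' _ => h1 s', Finset.sum_comm]
  refine Finset.sum_congr rfl fun s _ => ?_
  rw [Finset.sum_comm]
  refine Finset.sum_congr rfl fun a _ => ?_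
  rw [← Finset.mul_sum, hPS, mul_one]

theorem rep (PS0 : S → ℝ) (PS : S → A → S → ℝ) (pb rat : S → A → ℝ)
    (hPS : ∀ s a, ∑ s', PS s a s' = 1) (hpb : ∀ s, ∑ a, pb s a = 1)
    (T : ℕ) (t : Fin (T + 1)) (f : S → A → ℝ) :
    trajExpSA T PS0 PS pb (fun s a =>
        (∏ t' ∈ Finset.Iio t, rat (s t') (a t')) * f (s t) (a t))
      = ∑ s0, ∑ a0, nu PS0 PS pb rat (t : ℕ) s0 * pb s0 a0 * f s0 a0 := by
  have hform : ∀ (s : Fin (T + 1) → S) (a : Fin (T + 1) → A),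
      (∏ t' : Fin (T + 1), cseq rat f (t : ℕ) (t' : ℕ) (s t') (a t'))
        = (∏ t' ∈ Finset.Iio t, rat (s t') (a t')) * f (s t) (a t) := by
    intro s a
    have hsub : ∏ t' : Fin (T + 1), cseq rat f (t : ℕ) (t' : ℕ) (s t') (a t')
        = ∏ t' ∈ Finset.Iic t, cseq rat f (t : ℕ) (t' : ℕ) (s t') (a t') := by
      refine (Finset.prod_subset (Finset.subset_univ _) fun t' _ ht' => ?_).symm
      have : (t : ℕ) < (t' : ℕ) := by
        have := Finset.mem_Iic.not.mp ht'
        exact lt_of_not_ge fun hle => this (Fin.le_def.mpr hle)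
      rw [cseq_gt this]
    rw [hsub, ← Finset.Iio_insert, Finset.prod_insert (by simp)]
    rw [cseq_eq]
    rw [mul_comm]
    congr 1
    refine Finset.prod_congr rfl fun t' ht' => ?_
    rw [cseq_lt (by exact_mod_cast Finset.mem_Iio.mp ht')]
  have hmain : trajExpSA T PS0 PS pb (fun s a =>
      (∏ t' ∈ Finset.Iio t, rat (s t') (a t')) * f (s t) (a t))
      = ∑ s0, ∑ a0, M PS0 PS pb (cseq rat f (t : ℕ)) T s0 a0 := by
    have := sum_traj PS0 PS pb (cseq rat f (t : ℕ)) T (fun _ _ => 1)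
    unfold trajExpSA
    simp only [mul_one] at this
    rw [← this]
    refine Finset.sum_congr rfl fun s _ => Finset.sum_congr rfl fun a _ => ?_
    show trajProb T PS0 PS pb s a * ((∏ t' ∈ Finset.Iio t, rat (s t') (a t')) * f (s t) (a t)) = _
    rw [hform s a]
  rw [hmain]
  have hdown : ∀ d : ℕ, ∑ s0, ∑ a0, M PS0 PS pb (cseq rat f (t : ℕ)) ((t : ℕ) + d) s0 a0
      = ∑ s0, ∑ a0, M PS0 PS pb (cseq rat f (t : ℕ)) (t : ℕ) s0 a0 := by
    intro d
    induction d with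
    | zero => rfl
    | succ d ih =>
      rw [← ih]
      have hone := sum_M_one PS0 PS pb hPS hpb (cseq rat f (t : ℕ)) ((t : ℕ) + d)
        (cseq_gt (by omega))
      exact hone
  have ht : (t : ℕ) ≤ T := Nat.lt_succ_iff.mp t.isLt
  obtain ⟨d, hd⟩ := Nat.exists_eq_add_of_le ht
  have hfin := hdown d
  rw [← hd] at hfin
  rw [hfin]
  refine Finset.sum_congr rfl fun s0 _ => Finset.sum_congr rfl fun a0 _ => ?_
  rw [M_cseq_eq]

theorem wgen_step (PS0 : S → ℝ) (PS : S → A → S → ℝ) (pb rat : S → A → ℝ)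
    (hpb : ∀ s, ∑ a, pb s a = 1) (h : S → ℝ) (k : ℕ) :
    ∑ s0, ∑ a0, nu PS0 PS pb rat (k + 1) s0 * pb s0 a0 * h s0
      = ∑ s, ∑ a, nu PS0 PS pb rat k s * pb s a *
          (rat s a * ∑ s', PS s a s' * h s') := by
  have hL : ∀ s0, ∑ a0, nu PS0 PS pb rat (k + 1) s0 * pb s0 a0 * h s0
      = nu PS0 PS pb rat (k + 1) s0 * h s0 := by
    intro s0
    have : ∀ a0, nu PS0 PS pb rat (k + 1) s0 * pb s0 a0 * h s0
        = nu PS0 PS pb rat (k + 1) s0 * h s0 * pb s0 a0 := fun a0 => by ring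
    rw [Finset.sum_congr rfl fun a0 _ => this a0, ← Finset.mul_sum, hpb s0, mul_one]
  rw [Finset.sum_congr rfl fun s0 _ => hL s0]
  show ∑ s0, (∑ s, ∑ a, nu PS0 PS pb rat k s * pb s a * rat s a * PS s a s0) * h s0 = _
  rw [Finset.sum_congr rfl fun s0 _ => Finset.sum_mul _ _ _, Finset.sum_comm]
  refine Finset.sum_congr rfl fun s _ => ?_
  rw [Finset.sum_congr rfl fun s0 _ => Finset.sum_mul _ _ _, Finset.sum_comm]
  refine Finset.sum_congr rfl fun a _ => ?_
  rw [Finset.mul_sum, Finset.mul_sum]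
  refine Finset.sum_congr rfl fun s0 _ => ?_
  ring

open MeasureTheory in
theorem pi_map_eval {ι : Type} [Fintype ι] {α : ι → Type} [∀ i, MeasurableSpace (α i)]
    (μ : ∀ i, Measure (α i)) [∀ i, IsProbabilityMeasure (μ i)] (i : ι) :
    (Measure.pi μ).map (Function.eval i) = μ i := by
  classical
  ext s hs
  rw [Measure.map_apply (measurable_pi_apply i) hs]
  rw [Set.eval_preimage, Measure.pi_pi]
  rw [Fintype.prod_eq_single i (fun j hj => by
    rw [Function.update_of_ne hj]; exact measure_univ)]
  rw [Function.update_self]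

open MeasureTheory in
theorem integrable_eval {ι : Type} [Fintype ι] (μ : ι → Measure ℝ)
    [∀ i, IsProbabilityMeasure (μ i)] (i : ι)
    (h : Integrable (fun x : ℝ => x) (μ i)) :
    Integrable (fun r : ι → ℝ => r i) (Measure.pi μ) := by
  have h2 : Integrable (fun x : ℝ => x) ((Measure.pi μ).map (Function.eval i)) := by
    rw [pi_map_eval]; exact h
  exact (integrable_map_measure (by rw [pi_map_eval μ i]; exact h.1)
    (measurable_pi_apply i).aemeasurable).mp h2

open MeasureTheory in
theorem integral_eval {ι : Type} [Fintype ι] (μ : ι → Measure ℝ)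
    [∀ i, IsProbabilityMeasure (μ i)] (i : ι) :
    ∫ r : ι → ℝ, r i ∂(Measure.pi μ) = ∫ x, x ∂(μ i) := by
  have h1 : ∫ x, x ∂((Measure.pi μ).map (Function.eval i))
      = ∫ r : ι → ℝ, r i ∂(Measure.pi μ) :=
    integral_map (measurable_pi_apply i).aemeasurable
      measurable_id.aestronglyMeasurable
  rw [← h1, pi_map_eval]

open MeasureTheory in
theorem integral_psi {S A : Type} [Fintype S] [Fintype A] (T : ℕ)
    (PR : S → A → Measure ℝ) [∀ s a, IsProbabilityMeasure (PR s a)]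
    (μ : S → A → ℝ) (hμ : ∀ s a, μ s a = ∫ x, x ∂(PR s a))
    (hInt : ∀ s a, Integrable (fun x : ℝ => x) (PR s a))
    (πe ptb : S → A → ℝ) (γ : ℝ) (q : Fin (T + 1) → S → A → ℝ)
    (s : Fin (T + 1) → S) (a : Fin (T + 1) → A) :
    ∫ r, psiDR πe ptb γ q s a r ∂(Measure.pi fun t => PR (s t) (a t))
      = ∑ t : Fin (T + 1), γ ^ (t : ℕ) *
          (rhoLE πe ptb t s a * (μ (s t) (a t) - q t (s t) (a t))
            + rhoLT πe ptb t s a * ∑ a' : A, πe (s t) a' * q t (s t) a') := by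
  have hev : ∀ t : Fin (T + 1),
      Integrable (fun r : Fin (T + 1) → ℝ => r t) (Measure.pi fun t => PR (s t) (a t)) :=
    fun t => integrable_eval _ t (hInt _ _)
  unfold psiDR
  have hterm : ∀ t : Fin (T + 1), t ∈ Finset.univ → Integrable (fun r : Fin (T + 1) → ℝ =>
      γ ^ (t : ℕ) * (rhoLE πe ptb t s a * (r t - q t (s t) (a t))
        + rhoLT πe ptb t s a * ∑ a' : A, πe (s t) a' * q t (s t) a'))
      (Measure.pi fun t => PR (s t) (a t)) := fun t _ =>
    (((((hev t).sub (integrable_const _)).const_mul _).add (integrable_const _)).const_mul _)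
  rw [integral_finset_sum _ hterm]
  refine Finset.sum_congr rfl fun t _ => ?_
  rw [integral_const_mul]
  congr 1
  have h1 : Integrable (fun r : Fin (T + 1) → ℝ =>
      rhoLE πe ptb t s a * (r t - q t (s t) (a t)))
      (Measure.pi fun t => PR (s t) (a t)) :=
    ((hev t).sub (integrable_const _)).const_mul _
  have h2 : Integrable (fun _ : Fin (T + 1) → ℝ =>
      rhoLT πe ptb t s a * ∑ a' : A, πe (s t) a' * q t (s t) a')
      (Measure.pi fun t => PR (s t) (a t)) := integrable_const _
  rw [integral_add h1 h2, integral_const_mul, integral_sub (hev t) (integrable_const _),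
    integral_const, integral_eval]
  simp [hμ]

theorem trajExpSA_congr (T : ℕ) (PS0 : S → ℝ) (PS : S → A → S → ℝ) (pb : S → A → ℝ)
    {f g : (Fin (T + 1) → S) → (Fin (T + 1) → A) → ℝ} (h : ∀ s a, f s a = g s a) :
    trajExpSA T PS0 PS pb f = trajExpSA T PS0 PS pb g := by
  unfold trajExpSA
  exact Finset.sum_congr rfl fun s _ => Finset.sum_congr rfl fun a _ => by rw [h s a]

theorem trajExpSA_sum (T : ℕ) (PS0 : S → ℝ) (PS : S → A → S → ℝ) (pb : S → A → ℝ)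
    {ι : Type} (u : Finset ι) (g : ι → (Fin (T + 1) → S) → (Fin (T + 1) → A) → ℝ) :
    trajExpSA T PS0 PS pb (fun s a => ∑ i ∈ u, g i s a)
      = ∑ i ∈ u, trajExpSA T PS0 PS pb (g i) := by
  unfold trajExpSA
  simp only [Finset.mul_sum]
  exact Eq.trans (Finset.sum_congr rfl fun s _ => Finset.sum_comm)
    Finset.sum_comm

theorem trajExpSA_comb (T : ℕ) (PS0 : S → ℝ) (PS : S → A → S → ℝ) (pb : S → A → ℝ)
    (c : ℝ) (X Y : (Fin (T + 1) → S) → (Fin (T + 1) → A) → ℝ) :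
    trajExpSA T PS0 PS pb (fun s a => c * (X s a + Y s a))
      = c * (trajExpSA T PS0 PS pb X + trajExpSA T PS0 PS pb Y) := by
  unfold trajExpSA
  rw [← Finset.sum_add_distrib, Finset.mul_sum]
  refine Finset.sum_congr rfl fun s _ => ?_
  rw [← Finset.sum_add_distrib, Finset.mul_sum]
  refine Finset.sum_congr rfl fun a _ => ?_
  ring

open MeasureTheory in
theorem expand (T : ℕ) (PS0 : S → ℝ) (PS : S → A → S → ℝ) (PR : S → A → Measure ℝ)
    [∀ s a, IsProbabilityMeasure (PR s a)]
    (μ : S → A → ℝ) (hμ : ∀ s a, μ s a = ∫ x, x ∂(PR s a))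
    (hInt : ∀ s a, Integrable (fun x : ℝ => x) (PR s a))
    (pb πe : S → A → ℝ)
    (hPS1 : ∀ s a, ∑ s', PS s a s' = 1) (hpb1 : ∀ s, ∑ a, pb s a = 1)
    (γ : ℝ) (pbr : S → A → ℝ) (qbar : Fin (T + 1) → S → A → ℝ) :
    trajExp T PS0 PS PR pb (psiDR πe pbr γ qbar)
      = ∑ t : Fin (T + 1), γ ^ (t : ℕ) *
          ((∑ s0, ∑ a0, nu PS0 PS pb (fun s a => πe s a / pbr s a) (t : ℕ) s0 *
              pb s0 a0 * (πe s0 a0 / pbr s0 a0 * (μ s0 a0 - qbar t s0 a0)))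
            + (∑ s0, ∑ a0, nu PS0 PS pb (fun s a => πe s a / pbr s a) (t : ℕ) s0 *
                pb s0 a0 * (∑ a' : A, πe s0 a' * qbar t s0 a'))) := by
  have h0 : trajExp T PS0 PS PR pb (psiDR πe pbr γ qbar)
      = trajExpSA T PS0 PS pb (fun s a => ∑ t : Fin (T + 1), γ ^ (t : ℕ) *
          (rhoLE πe pbr t s a * (μ (s t) (a t) - qbar t (s t) (a t))
            + rhoLT πe pbr t s a * ∑ a' : A, πe (s t) a' * qbar t (s t) a')) := by
    unfold trajExp trajExpSA
    refine Finset.sum_congr rfl fun s _ => Finset.sum_congr rfl fun a _ => ?_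
    rw [integral_psi T PR μ hμ hInt πe pbr γ qbar s a]
  rw [h0, trajExpSA_sum]
  refine Finset.sum_congr rfl fun t _ => ?_
  rw [trajExpSA_comb]
  congr 1
  congr 1
  · have hrep := rep PS0 PS pb (fun s a => πe s a / pbr s a) hPS1 hpb1 T t
      (fun s0 a0 => πe s0 a0 / pbr s0 a0 * (μ s0 a0 - qbar t s0 a0))
    rw [← hrep]
    refine trajExpSA_congr T PS0 PS pb fun s a => ?_
    show rhoLE πe pbr t s a * (μ (s t) (a t) - qbar t (s t) (a t)) = _
    unfold rhoLE
    rw [← Finset.Iio_insert, Finset.prod_insert (by simp)]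
    ring
  · have hrep := rep PS0 PS pb (fun s a => πe s a / pbr s a) hPS1 hpb1 T t
      (fun s0 a0 => ∑ a' : A, πe s0 a' * qbar t s0 a')
    rw [← hrep]
    refine trajExpSA_congr T PS0 PS pb fun s a => ?_
    show rhoLT πe pbr t s a * (∑ a' : A, πe (s t) a' * qbar t (s t) a') = _
    unfold rhoLT
    rfl

/-- The perturbed importance ratio. -/
noncomputable def ratfn (pb πe ptb : S → A → ℝ) (r : ℝ) : S → A → ℝ :=
  fun s a => πe s a / (pb s a + r * (ptb s a - pb s a))

/-- The `q`-error, as a function of natural time index. -/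
noncomputable def DqN (T : ℕ) (μ : S → A → ℝ) (PS : S → A → S → ℝ) (πe : S → A → ℝ)
    (γ : ℝ) (qt : Fin (T + 1) → S → A → ℝ) (k : ℕ) : S → A → ℝ :=
  fun s a => (if h : k < T + 1 then qt ⟨k, h⟩ s a else 0) - qAux μ PS πe γ (T - k) s a

theorem bellman (μ : S → A → ℝ) (PS : S → A → S → ℝ) (πe : S → A → ℝ) (γ : ℝ)
    (T k : ℕ) (hk : k < T) (s : S) (a : A) :
    μ s a - qAux μ PS πe γ (T - k) s a
      = -(γ * ∑ s', PS s a s' * ∑ a', πe s' a' * qAux μ PS πe γ (T - (k + 1)) s' a') := by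
  have h : T - k = (T - (k + 1)) + 1 := by omega
  rw [h]
  have h2 : ∑ s', ∑ a', PS s a s' * πe s' a' * qAux μ PS πe γ (T - (k + 1)) s' a'
      = ∑ s', PS s a s' * ∑ a', πe s' a' * qAux μ PS πe γ (T - (k + 1)) s' a' := by
    refine Finset.sum_congr rfl fun s' _ => ?_
    rw [Finset.mul_sum]
    exact Finset.sum_congr rfl fun a' _ => by ring
  show μ s a - (μ s a + γ * ∑ s', ∑ a', PS s a s' * πe s' a' *
      qAux μ PS πe γ (T - (k + 1)) s' a') = _
  rw [h2]
  ring

theorem sum2_sub (f g : S → A → ℝ) :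
    (∑ s0, ∑ a0, (f s0 a0 - g s0 a0))
      = (∑ s0, ∑ a0, f s0 a0) - ∑ s0, ∑ a0, g s0 a0 := by
  rw [← Finset.sum_sub_distrib]
  exact Finset.sum_congr rfl fun s0 _ => Finset.sum_sub_distrib _ _

theorem sum2_add (f g : S → A → ℝ) :
    (∑ s0, ∑ a0, (f s0 a0 + g s0 a0))
      = (∑ s0, ∑ a0, f s0 a0) + ∑ s0, ∑ a0, g s0 a0 := by
  rw [← Finset.sum_add_distrib]
  exact Finset.sum_congr rfl fun s0 _ => Finset.sum_add_distrib

theorem sum2_rmul (g : S → A → ℝ) (r : ℝ) :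
    (∑ s0, ∑ a0, r * g s0 a0) = r * ∑ s0, ∑ a0, g s0 a0 := by
  rw [Finset.mul_sum]
  exact Finset.sum_congr rfl fun s0 _ => (Finset.mul_sum _ _ _).symm

/-- Generic weighted expectation at time `k`. -/
noncomputable def WW (PS0 : S → ℝ) (PS : S → A → S → ℝ) (pb rat : S → A → ℝ)
    (k : ℕ) (f : S → A → ℝ) : ℝ :=
  ∑ s0, ∑ a0, nu PS0 PS pb rat k s0 * pb s0 a0 * f s0 a0

theorem WW_congr {PS0 : S → ℝ} {PS : S → A → S → ℝ} {pb rat : S → A → ℝ} {k : ℕ}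
    {f g : S → A → ℝ} (h : ∀ s a, f s a = g s a) :
    WW PS0 PS pb rat k f = WW PS0 PS pb rat k g := by
  unfold WW
  exact Finset.sum_congr rfl fun s0 _ => Finset.sum_congr rfl fun a0 _ => by rw [h s0 a0]

theorem WW_sub (PS0 : S → ℝ) (PS : S → A → S → ℝ) (pb rat : S → A → ℝ) (k : ℕ)
    (f g : S → A → ℝ) :
    WW PS0 PS pb rat k (fun s a => f s a - g s a)
      = WW PS0 PS pb rat k f - WW PS0 PS pb rat k g := by
  unfold WW
  rw [← sum2_sub]
  exact Finset.sum_congr rfl fun s0 _ => Finset.sum_congr rfl fun a0 _ => by ring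

theorem WW_add (PS0 : S → ℝ) (PS : S → A → S → ℝ) (pb rat : S → A → ℝ) (k : ℕ)
    (f g : S → A → ℝ) :
    WW PS0 PS pb rat k (fun s a => f s a + g s a)
      = WW PS0 PS pb rat k f + WW PS0 PS pb rat k g := by
  unfold WW
  rw [← sum2_add]
  exact Finset.sum_congr rfl fun s0 _ => Finset.sum_congr rfl fun a0 _ => by ring

theorem WW_rmul (PS0 : S → ℝ) (PS : S → A → S → ℝ) (pb rat : S → A → ℝ) (k : ℕ)
    (f : S → A → ℝ) (r : ℝ) :
    WW PS0 PS pb rat k (fun s a => r * f s a) = r * WW PS0 PS pb rat k f := by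
  unfold WW
  rw [← sum2_rmul]
  exact Finset.sum_congr rfl fun s0 _ => Finset.sum_congr rfl fun a0 _ => by ring

theorem WW_zero (PS0 : S → ℝ) (PS : S → A → S → ℝ) (pb rat : S → A → ℝ) (k : ℕ)
    {f : S → A → ℝ} (h : ∀ s a, f s a = 0) :
    WW PS0 PS pb rat k f = 0 := by
  rw [WW_congr h]
  simp [WW]

theorem WW_step (PS0 : S → ℝ) (PS : S → A → S → ℝ) (pb rat : S → A → ℝ)
    (hpb : ∀ s, ∑ a, pb s a = 1) (h : S → ℝ) (k : ℕ) :
    WW PS0 PS pb rat (k + 1) (fun s _ => h s)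
      = WW PS0 PS pb rat k (fun s a => rat s a * ∑ s', PS s a s' * h s') :=
  wgen_step PS0 PS pb rat hpb h k

open MeasureTheory in
theorem key_eq (T : ℕ) (PS0 : S → ℝ) (PS : S → A → S → ℝ) (PR : S → A → Measure ℝ)
    [∀ s a, IsProbabilityMeasure (PR s a)]
    (μ : S → A → ℝ) (hμ : ∀ s a, μ s a = ∫ x, x ∂(PR s a))
    (hInt : ∀ s a, Integrable (fun x : ℝ => x) (PR s a))
    (pb πe : S → A → ℝ)
    (hPS1 : ∀ s a, ∑ s', PS s a s' = 1) (hpb1 : ∀ s, ∑ a, pb s a = 1)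
    (γ : ℝ) (ptb : S → A → ℝ) (qt : Fin (T + 1) → S → A → ℝ) (r : ℝ) :
    trajExp T PS0 PS PR pb
        (psiDR πe (fun s a => pb s a + r * (ptb s a - pb s a)) γ
          (fun t s a => qRec T μ PS πe γ t s a + r * (qt t s a - qRec T μ PS πe γ t s a)))
      = (∑ s0, PS0 s0 * ∑ a' : A, πe s0 a' * qAux μ PS πe γ T s0 a')
        + r * (∑ k ∈ Finset.range (T + 1), γ ^ k *
            (WW PS0 PS pb (ratfn pb πe ptb r) k
                (fun s a => ∑ a' : A, πe s a' * DqN T μ PS πe γ qt k s a')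
              - WW PS0 PS pb (ratfn pb πe ptb r) k
                  (fun s a => ratfn pb πe ptb r s a * DqN T μ PS πe γ qt k s a))) := by
  have h0 : trajExp T PS0 PS PR pb
        (psiDR πe (fun s a => pb s a + r * (ptb s a - pb s a)) γ
          (fun t s a => qRec T μ PS πe γ t s a + r * (qt t s a - qRec T μ PS πe γ t s a)))
      = ∑ t : Fin (T + 1), γ ^ (t : ℕ) *
          (WW PS0 PS pb (ratfn pb πe ptb r) (t : ℕ)
              (fun s0 a0 => ratfn pb πe ptb r s0 a0 * (μ s0 a0 -
                (qRec T μ PS πe γ t s0 a0 + r * (qt t s0 a0 - qRec T μ PS πe γ t s0 a0))))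
            + WW PS0 PS pb (ratfn pb πe ptb r) (t : ℕ)
                (fun s0 a0 => ∑ a' : A, πe s0 a' *
                  (qRec T μ PS πe γ t s0 a' + r * (qt t s0 a' - qRec T μ PS πe γ t s0 a')))) :=
    expand T PS0 PS PR μ hμ hInt pb πe hPS1 hpb1 γ _ _
  rw [h0]
  have h1 : ∀ t : Fin (T + 1), γ ^ (t : ℕ) *
        (WW PS0 PS pb (ratfn pb πe ptb r) (t : ℕ)
            (fun s0 a0 => ratfn pb πe ptb r s0 a0 * (μ s0 a0 -
              (qRec T μ PS πe γ t s0 a0 + r * (qt t s0 a0 - qRec T μ PS πe γ t s0 a0))))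
          + WW PS0 PS pb (ratfn pb πe ptb r) (t : ℕ)
              (fun s0 a0 => ∑ a' : A, πe s0 a' *
                (qRec T μ PS πe γ t s0 a' + r * (qt t s0 a' - qRec T μ PS πe γ t s0 a'))))
      = (fun k => γ ^ k *
          (WW PS0 PS pb (ratfn pb πe ptb r) k
              (fun s0 a0 => ratfn pb πe ptb r s0 a0 * (μ s0 a0 -
                (qAux μ PS πe γ (T - k) s0 a0 + r * DqN T μ PS πe γ qt k s0 a0)))
            + WW PS0 PS pb (ratfn pb πe ptb r) k
                (fun s0 a0 => ∑ a' : A, πe s0 a' *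
                  (qAux μ PS πe γ (T - k) s0 a' + r * DqN T μ PS πe γ qt k s0 a')))) (t : ℕ) := by
    intro t
    simp only [qRec, DqN, dif_pos t.isLt, Fin.eta]
  rw [Finset.sum_congr rfl fun t _ => h1 t]
  rw [Fin.sum_univ_eq_sum_range (fun k => γ ^ k *
          (WW PS0 PS pb (ratfn pb πe ptb r) k
              (fun s0 a0 => ratfn pb πe ptb r s0 a0 * (μ s0 a0 -
                (qAux μ PS πe γ (T - k) s0 a0 + r * DqN T μ PS πe γ qt k s0 a0)))
            + WW PS0 PS pb (ratfn pb πe ptb r) k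
                (fun s0 a0 => ∑ a' : A, πe s0 a' *
                  (qAux μ PS πe γ (T - k) s0 a' + r * DqN T μ PS πe γ qt k s0 a')))) (T + 1)]
  set R := ratfn pb πe ptb r with hR
  set D := DqN T μ PS πe γ qt with hD
  have hsplit : ∀ k : ℕ, γ ^ k *
        (WW PS0 PS pb R k (fun s0 a0 => R s0 a0 * (μ s0 a0 -
            (qAux μ PS πe γ (T - k) s0 a0 + r * D k s0 a0)))
          + WW PS0 PS pb R k (fun s0 a0 => ∑ a' : A, πe s0 a' *
              (qAux μ PS πe γ (T - k) s0 a' + r * D k s0 a')))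
      = (γ ^ k * (WW PS0 PS pb R k
            (fun s0 a0 => R s0 a0 * (μ s0 a0 - qAux μ PS πe γ (T - k) s0 a0))
          + WW PS0 PS pb R k
            (fun s0 a0 => ∑ a' : A, πe s0 a' * qAux μ PS πe γ (T - k) s0 a')))
        + r * (γ ^ k * (WW PS0 PS pb R k (fun s a => ∑ a' : A, πe s a' * D k s a')
            - WW PS0 PS pb R k (fun s a => R s a * D k s a))) := by
    intro k
    have e1 : WW PS0 PS pb R k (fun s0 a0 => R s0 a0 * (μ s0 a0 -
          (qAux μ PS πe γ (T - k) s0 a0 + r * D k s0 a0)))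
        = WW PS0 PS pb R k (fun s0 a0 => R s0 a0 * (μ s0 a0 - qAux μ PS πe γ (T - k) s0 a0))
          - r * WW PS0 PS pb R k (fun s a => R s a * D k s a) := by
      rw [← WW_rmul, ← WW_sub]
      exact WW_congr fun s a => by ring
    have e2 : WW PS0 PS pb R k (fun s0 a0 => ∑ a' : A, πe s0 a' *
          (qAux μ PS πe γ (T - k) s0 a' + r * D k s0 a'))
        = WW PS0 PS pb R k (fun s0 a0 => ∑ a' : A, πe s0 a' * qAux μ PS πe γ (T - k) s0 a')
          + r * WW PS0 PS pb R k (fun s a => ∑ a' : A, πe s a' * D k s a') := by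
      rw [← WW_rmul, ← WW_add]
      refine WW_congr fun s a => ?_
      rw [Finset.mul_sum, ← Finset.sum_add_distrib]
      exact Finset.sum_congr rfl fun a' _ => by ring
    rw [e1, e2]
    ring
  rw [Finset.sum_congr rfl fun k _ => hsplit k, Finset.sum_add_distrib]
  have hW1aT : WW PS0 PS pb R T
      (fun s0 a0 => R s0 a0 * (μ s0 a0 - qAux μ PS πe γ (T - T) s0 a0)) = 0 := by
    refine WW_zero PS0 PS pb R T fun s a => ?_
    rw [Nat.sub_self]
    show R s a * (μ s a - μ s a) = 0
    ring
  have hW1a_lt : ∀ k, k < T →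
      WW PS0 PS pb R k (fun s0 a0 => R s0 a0 * (μ s0 a0 - qAux μ PS πe γ (T - k) s0 a0))
        = -(γ * WW PS0 PS pb R (k + 1)
            (fun s0 _ => ∑ a' : A, πe s0 a' * qAux μ PS πe γ (T - (k + 1)) s0 a')) := by
    intro k hk
    have e : WW PS0 PS pb R k
          (fun s0 a0 => R s0 a0 * (μ s0 a0 - qAux μ PS πe γ (T - k) s0 a0))
        = WW PS0 PS pb R k (fun s a => (-γ) * (R s a * ∑ s', PS s a s' *
            ∑ a', πe s' a' * qAux μ PS πe γ (T - (k + 1)) s' a')) := by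
      refine WW_congr fun s a => ?_
      rw [bellman μ PS πe γ T k hk s a]
      ring
    rw [e, WW_rmul, ← WW_step PS0 PS pb R hpb1 _ k]
    ring
  have htel : ∑ k ∈ Finset.range (T + 1), γ ^ k *
        (WW PS0 PS pb R k (fun s0 a0 => R s0 a0 * (μ s0 a0 - qAux μ PS πe γ (T - k) s0 a0))
          + WW PS0 PS pb R k (fun s0 a0 => ∑ a' : A, πe s0 a' * qAux μ PS πe γ (T - k) s0 a'))
      = WW PS0 PS pb R 0 (fun s0 a0 => ∑ a' : A, πe s0 a' * qAux μ PS πe γ (T - 0) s0 a') := by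
    rw [Finset.sum_range_succ]
    have hlast : γ ^ T * (WW PS0 PS pb R T (fun s0 a0 => R s0 a0 *
          (μ s0 a0 - qAux μ PS πe γ (T - T) s0 a0))
        + WW PS0 PS pb R T (fun s0 a0 => ∑ a' : A, πe s0 a' * qAux μ PS πe γ (T - T) s0 a'))
        = γ ^ T * WW PS0 PS pb R T (fun s0 a0 => ∑ a' : A, πe s0 a' *
            qAux μ PS πe γ (T - T) s0 a') := by
      rw [hW1aT]
      ring
    rw [hlast]
    have hin : ∀ k ∈ Finset.range T, γ ^ k *
          (WW PS0 PS pb R k (fun s0 a0 => R s0 a0 * (μ s0 a0 - qAux μ PS πe γ (T - k) s0 a0))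
            + WW PS0 PS pb R k (fun s0 a0 => ∑ a' : A, πe s0 a' * qAux μ PS πe γ (T - k) s0 a'))
        = (fun j => γ ^ j * WW PS0 PS pb R j
            (fun s0 a0 => ∑ a' : A, πe s0 a' * qAux μ PS πe γ (T - j) s0 a')) k
          - (fun j => γ ^ j * WW PS0 PS pb R j
              (fun s0 a0 => ∑ a' : A, πe s0 a' * qAux μ PS πe γ (T - j) s0 a')) (k + 1) := by
      intro k hk
      rw [hW1a_lt k (Finset.mem_range.mp hk)]
      ring
    rw [Finset.sum_congr rfl hin, Finset.sum_range_sub']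
    simp
  rw [htel, ← Finset.mul_sum]
  have hC : WW PS0 PS pb R 0
      (fun s0 a0 => ∑ a' : A, πe s0 a' * qAux μ PS πe γ (T - 0) s0 a')
      = ∑ s0, PS0 s0 * ∑ a' : A, πe s0 a' * qAux μ PS πe γ T s0 a' := by
    show ∑ s0, ∑ a0, PS0 s0 * pb s0 a0 *
        (∑ a' : A, πe s0 a' * qAux μ PS πe γ (T - 0) s0 a') = _
    refine Finset.sum_congr rfl fun s0 _ => ?_
    have hpt : ∀ a0 : A, PS0 s0 * pb s0 a0 *
          (∑ a' : A, πe s0 a' * qAux μ PS πe γ (T - 0) s0 a')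
        = (PS0 s0 * ∑ a' : A, πe s0 a' * qAux μ PS πe γ (T - 0) s0 a') * pb s0 a0 :=
      fun a0 => by ring
    rw [Finset.sum_congr rfl fun a0 _ => hpt a0, ← Finset.mul_sum, hpb1 s0, mul_one]
    rfl
  rw [hC]

end Neyman
end NeymanAux

/-- Neyman orthogonality of the doubly robust score. For the true nuisance
tuple `η = (πb, {q_t^{πe}})` (with `q_t^{πe}` given by the backward recursion) and any
candidate tuple `η̃ = (π̃b, {q̃_t})`, the map
`r ↦ E_{H∼πb}[ψ(H; η + r(η̃ − η))]` is differentiable at `r = 0` with derivative `0`. -/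
theorem neyman_orthogonality_doubly_robust
    {S A : Type} [Fintype S] [Fintype A]
    (T : ℕ) (PS0 : S → ℝ) (PS : S → A → S → ℝ) (PR : S → A → Measure ℝ)
    [∀ s a, IsProbabilityMeasure (PR s a)]
    (μ : S → A → ℝ) (hμ : ∀ s a, μ s a = ∫ x, x ∂(PR s a))
    (hInt : ∀ s a, MeasureTheory.Integrable (fun x : ℝ => x) (PR s a))
    (πb πe : S → A → ℝ) (γ : ℝ)
    (hPS0 : IsInitDist PS0) (hPS : IsTransKernel PS)
    (hπb : IsPolicy πb) (hπe : IsPolicy πe)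
    (hpos : ∀ s a, 0 < πb s a)
    (hγ0 : 0 ≤ γ) (hγ1 : γ ≤ 1)
    (πtb : S → A → ℝ) (qt : Fin (T + 1) → S → A → ℝ) :
    HasDerivAt
      (fun r : ℝ =>
        trajExp T PS0 PS PR πb
          (psiDR πe
            (fun s a => πb s a + r * (πtb s a - πb s a)) γ
            (fun t s a => qRec T μ PS πe γ t s a
              + r * (qt t s a - qRec T μ PS πe γ t s a))))
      0 0 := by
  have hPS1 : ∀ s a, ∑ s', PS s a s' = 1 := fun s a => (hPS s a).2
  have hpb1 : ∀ s, ∑ a, πb s a = 1 := fun s => (hπb s).2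
  set C : ℝ := ∑ s0, PS0 s0 * ∑ a' : A, πe s0 a' * qAux μ PS πe γ T s0 a' with hCdef
  set B : ℝ → ℝ := fun r => ∑ k ∈ Finset.range (T + 1), γ ^ k *
      (Neyman.WW PS0 PS πb (Neyman.ratfn πb πe πtb r) k
          (fun s a => ∑ a' : A, πe s a' * Neyman.DqN T μ PS πe γ qt k s a')
        - Neyman.WW PS0 PS πb (Neyman.ratfn πb πe πtb r) k
            (fun s a => Neyman.ratfn πb πe πtb r s a * Neyman.DqN T μ PS πe γ qt k s a))
    with hBdef
  have key : ∀ r : ℝ,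
      trajExp T PS0 PS PR πb
        (psiDR πe (fun s a => πb s a + r * (πtb s a - πb s a)) γ
          (fun t s a => qRec T μ PS πe γ t s a
            + r * (qt t s a - qRec T μ PS πe γ t s a)))
      = C + r * B r := fun r =>
    Neyman.key_eq T PS0 PS PR μ hμ hInt πb πe hPS1 hpb1 γ πtb qt r
  have keyf : (fun r : ℝ =>
      trajExp T PS0 PS PR πb
        (psiDR πe (fun s a => πb s a + r * (πtb s a - πb s a)) γ
          (fun t s a => qRec T μ PS πe γ t s a
            + r * (qt t s a - qRec T μ PS πe γ t s a))))
      = fun r => C + r * B r := funext key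
  rw [keyf]
  -- continuity of the ingredients in `r` at `0`
  have hrc : ∀ s a, ContinuousAt (fun r : ℝ => Neyman.ratfn πb πe πtb r s a) 0 := by
    intro s a
    apply ContinuousAt.div continuousAt_const
      (continuousAt_const.add (continuousAt_id.mul continuousAt_const))
    simpa using (hpos s a).ne'
  have hnuc : ∀ (k : ℕ) (s : S),
      ContinuousAt (fun r : ℝ => Neyman.nu PS0 PS πb (Neyman.ratfn πb πe πtb r) k s) 0 := by
    intro k
    induction k with
    | zero => intro s; exact continuousAt_const
    | succ k ih =>
      intro s'
      show ContinuousAt (fun r : ℝ => ∑ s, ∑ a,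
        Neyman.nu PS0 PS πb (Neyman.ratfn πb πe πtb r) k s * πb s a *
          Neyman.ratfn πb πe πtb r s a * PS s a s') 0
      apply tendsto_finset_sum
      intro s _
      apply tendsto_finset_sum
      intro a _
      exact (((ih s).mul continuousAt_const).mul (hrc s a)).mul continuousAt_const
  have hBc : ContinuousAt B 0 := by
    rw [hBdef]
    apply tendsto_finset_sum
    intro k _
    apply ContinuousAt.mul continuousAt_const
    apply ContinuousAt.sub
    · show ContinuousAt (fun r : ℝ => ∑ s0, ∑ a0,
        Neyman.nu PS0 PS πb (Neyman.ratfn πb πe πtb r) k s0 * πb s0 a0 *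
          (∑ a' : A, πe s0 a' * Neyman.DqN T μ PS πe γ qt k s0 a')) 0
      apply tendsto_finset_sum
      intro s0 _
      apply tendsto_finset_sum
      intro a0 _
      exact ((hnuc k s0).mul continuousAt_const).mul continuousAt_const
    · show ContinuousAt (fun r : ℝ => ∑ s0, ∑ a0,
        Neyman.nu PS0 PS πb (Neyman.ratfn πb πe πtb r) k s0 * πb s0 a0 *
          (Neyman.ratfn πb πe πtb r s0 a0 * Neyman.DqN T μ PS πe γ qt k s0 a0)) 0
      apply tendsto_finset_sum
      intro s0 _
      apply tendsto_finset_sum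
      intro a0 _
      exact ((hnuc k s0).mul continuousAt_const).mul
        ((hrc s0 a0).mul continuousAt_const)
  have hB0 : B 0 = 0 := by
    rw [hBdef]
    refine Finset.sum_eq_zero fun k _ => ?_
    have hz : Neyman.WW PS0 PS πb (Neyman.ratfn πb πe πtb 0) k
          (fun s a => ∑ a' : A, πe s a' * Neyman.DqN T μ PS πe γ qt k s a')
        = Neyman.WW PS0 PS πb (Neyman.ratfn πb πe πtb 0) k
            (fun s a => Neyman.ratfn πb πe πtb 0 s a * Neyman.DqN T μ PS πe γ qt k s a) := by
      unfold Neyman.WW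
      refine Finset.sum_congr rfl fun s0 _ => ?_
      have hL : ∑ a0, Neyman.nu PS0 PS πb (Neyman.ratfn πb πe πtb 0) k s0 * πb s0 a0 *
            (∑ a' : A, πe s0 a' * Neyman.DqN T μ PS πe γ qt k s0 a')
          = Neyman.nu PS0 PS πb (Neyman.ratfn πb πe πtb 0) k s0 *
              ∑ a' : A, πe s0 a' * Neyman.DqN T μ PS πe γ qt k s0 a' := by
        have hpt : ∀ a0 : A, Neyman.nu PS0 PS πb (Neyman.ratfn πb πe πtb 0) k s0 * πb s0 a0 *
              (∑ a' : A, πe s0 a' * Neyman.DqN T μ PS πe γ qt k s0 a')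
            = (Neyman.nu PS0 PS πb (Neyman.ratfn πb πe πtb 0) k s0 *
                ∑ a' : A, πe s0 a' * Neyman.DqN T μ PS πe γ qt k s0 a') * πb s0 a0 :=
          fun a0 => by ring
        rw [Finset.sum_congr rfl fun a0 _ => hpt a0, ← Finset.mul_sum, hpb1 s0, mul_one]
      have hR : ∑ a0, Neyman.nu PS0 PS πb (Neyman.ratfn πb πe πtb 0) k s0 * πb s0 a0 *
            (Neyman.ratfn πb πe πtb 0 s0 a0 * Neyman.DqN T μ PS πe γ qt k s0 a0)
          = Neyman.nu PS0 PS πb (Neyman.ratfn πb πe πtb 0) k s0 *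
              ∑ a' : A, πe s0 a' * Neyman.DqN T μ PS πe γ qt k s0 a' := by
        rw [Finset.mul_sum]
        refine Finset.sum_congr rfl fun a0 _ => ?_
        have hrat0 : Neyman.ratfn πb πe πtb 0 s0 a0 = πe s0 a0 / πb s0 a0 := by
          simp [Neyman.ratfn]
        rw [hrat0]
        have hne : πb s0 a0 ≠ 0 := (hpos s0 a0).ne'
        field_simp
      rw [hL, hR]
    rw [hz, sub_self, mul_zero]
  rw [hasDerivAt_iff_tendsto_slope]
  have htend : Filter.Tendsto B (nhdsWithin 0 {(0 : ℝ)}ᶜ) (nhds 0) := by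
    have h := hBc.tendsto
    rw [hB0] at h
    exact h.mono_left nhdsWithin_le_nhds
  refine htend.congr' ?_
  filter_upwards [self_mem_nhdsWithin] with r hr
  have hr0 : r ≠ 0 := hr
  rw [slope_def_field]
  field_simp
  ring
end

section
/- In the contextual bandit case (T = 0), the doubly robust score with the true behavior policy is unbiased for any plug-in mean reward function: for every function μ̃ : S × A → ℝ, E[(π_e(A_0|S_0)/π_b(A_0|S_0))(R_0 − μ̃(S_0, A_0)) + Σ_{a∈A} π_e(a|S_0) μ̃(S_0, a)] = V^{π_e}, where the expectation is over H = (S_0, A_0, R_0) ∼ π_b and V^{π_e} = E_{S_0∼P_{S0}}[Σ_{a∈A} π_e(a|S_0) μ(S_0, a)]. -/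
open MeasureTheory

/-- in the contextual bandit case (`T = 0`), the doubly robust score with
the true behavior policy is unbiased for any plug-in mean reward function `μ̃`:
`E_{H∼πb}[(πe(A₀|S₀)/πb(A₀|S₀))(R₀ − μ̃(S₀,A₀)) + ∑_a πe(a|S₀) μ̃(S₀,a)] = V^{πe}`,
where `V^{πe} = E_{S₀∼PS0}[∑_a πe(a|S₀) μ(S₀,a)]` and the expectation over `H = (S₀,A₀,R₀)`
is `∑_{s,a} PS0(s) πb(a|s) ∫ · dP_R(·|s,a)`. -/
theorem contextual_bandit_dr_unbiased
    {S A : Type} [Fintype S] [Fintype A]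
    (PS0 : S → ℝ) (PR : S → A → Measure ℝ)
    [∀ s a, IsProbabilityMeasure (PR s a)]
    (μ : S → A → ℝ) (hμ : ∀ s a, μ s a = ∫ x, x ∂(PR s a))
    (hInt : ∀ s a, MeasureTheory.Integrable (fun x : ℝ => x) (PR s a))
    (πb πe : S → A → ℝ)
    (hPS0 : IsInitDist PS0)
    (hπb : IsPolicy πb) (hπe : IsPolicy πe)
    (hpos : ∀ s a, 0 < πb s a)
    (μt : S → A → ℝ) :
    ∑ s, ∑ a, PS0 s * πb s a *
        ∫ r, (πe s a / πb s a * (r - μt s a) + ∑ a', πe s a' * μt s a') ∂(PR s a)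
      = ∑ s, PS0 s * ∑ a, πe s a * μ s a := by
  have key : ∀ s a, (∫ r, (πe s a / πb s a * (r - μt s a) + ∑ a', πe s a' * μt s a') ∂(PR s a))
      = πe s a / πb s a * (μ s a - μt s a) + ∑ a', πe s a' * μt s a' := by
    intro s a
    have h1 : Integrable (fun r : ℝ => πe s a / πb s a * (r - μt s a)) (PR s a) := by
      apply Integrable.const_mul
      exact (hInt s a).sub (integrable_const _)
    rw [integral_add h1 (integrable_const _), integral_const_mul,
      integral_sub (hInt s a) (integrable_const _), integral_const, integral_const]
    simp [hμ s a]
  have hsum : ∀ s, ∑ a, πb s a * (πe s a / πb s a * (μ s a - μt s a) + ∑ a', πe s a' * μt s a')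
      = ∑ a, πe s a * μ s a := by
    intro s
    have h2 : ∀ a, πb s a * (πe s a / πb s a * (μ s a - μt s a) + ∑ a', πe s a' * μt s a')
        = πe s a * μ s a - πe s a * μt s a + πb s a * ∑ a', πe s a' * μt s a' := by
      intro a
      field_simp [(hpos s a).ne']
    simp only [h2, Finset.sum_add_distrib, Finset.sum_sub_distrib, ← Finset.sum_mul,
      (hπb s).2, one_mul]
    ring
  calc ∑ s, ∑ a, PS0 s * πb s a *
        ∫ r, (πe s a / πb s a * (r - μt s a) + ∑ a', πe s a' * μt s a') ∂(PR s a)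
      = ∑ s, PS0 s * ∑ a, πb s a * (πe s a / πb s a * (μ s a - μt s a) + ∑ a', πe s a' * μt s a') := by
        simp only [key, Finset.mul_sum, mul_assoc]
    _ = ∑ s, PS0 s * ∑ a, πe s a * μ s a := by simp only [hsum]
end

section
/- Variance of the contextual bandit doubly robust score at the true nuisances: in the T = 0 case, letting ψ(H) = (π_e(A_0|S_0)/π_b(A_0|S_0))(R_0 − μ(S_0, A_0)) + Σ_{a∈A} π_e(a|S_0) μ(S_0, a), one has E_{H∼π_b}[(ψ(H) − V^{π_e})²] = E_{S_0∼P_{S0}}[Σ_{a∈A} (π_e(a|S_0)²/π_b(a|S_0)) σ_R²(S_0, a) + (Σ_{a∈A} π_e(a|S_0) μ(S_0, a) − V^{π_e})²]. -/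
open MeasureTheory

/-- Auxiliary: second moment of an affine function of a centered variable. -/
lemma sq_integral (P : Measure ℝ) [IsProbabilityMeasure P] (m c d : ℝ)
    (hm : m = ∫ x, x ∂P)
    (hInt : Integrable (fun x : ℝ => x) P)
    (hInt2 : Integrable (fun x : ℝ => x ^ 2) P) :
    ∫ x, (c * (x - m) + d) ^ 2 ∂P = c ^ 2 * ∫ x, (x - m) ^ 2 ∂P + d ^ 2 := by
  have h1 : Integrable (fun x : ℝ => x - m) P := hInt.sub (integrable_const m)
  have h2 : Integrable (fun x : ℝ => (x - m) ^ 2) P := by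
    have : (fun x : ℝ => (x - m) ^ 2) = fun x : ℝ => x ^ 2 - 2 * m * x + m ^ 2 := by
      funext x; ring
    rw [this]
    exact ((hInt2.sub (hInt.const_mul (2 * m))).add (integrable_const _))
  have hmean : ∫ x, (x - m) ∂P = 0 := by
    rw [integral_sub hInt (integrable_const m), integral_const]
    simp [hm]
  have hA : Integrable (fun x : ℝ => c ^ 2 * (x - m) ^ 2) P := h2.const_mul _
  have hB : Integrable (fun x : ℝ => (2 * c * d) * (x - m)) P := h1.const_mul _
  have hAB : Integrable (fun x : ℝ => c ^ 2 * (x - m) ^ 2 + (2 * c * d) * (x - m)) P :=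
    hA.add hB
  have hexp : (fun x : ℝ => (c * (x - m) + d) ^ 2)
      = fun x : ℝ => (c ^ 2 * (x - m) ^ 2 + (2 * c * d) * (x - m)) + d ^ 2 := by
    funext x; ring
  rw [hexp, integral_add hAB (integrable_const _), integral_add hA hB,
    integral_const_mul, integral_const_mul, hmean, integral_const]
  simp

/-- variance of the contextual bandit doubly robust score at the true
nuisances. With `ψ(H) = (πe(A₀|S₀)/πb(A₀|S₀))(R₀ − μ(S₀,A₀)) + ∑_a πe(a|S₀) μ(S₀,a)` and
`V^{πe} = E_{S₀∼PS0}[∑_a πe(a|S₀) μ(S₀,a)]`,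
`E_{H∼πb}[(ψ(H) − V^{πe})²]
  = E_{S₀∼PS0}[∑_a (πe(a|S₀)²/πb(a|S₀)) σ_R²(S₀,a) + (∑_a πe(a|S₀) μ(S₀,a) − V^{πe})²]`,
where the expectation over `H = (S₀,A₀,R₀) ∼ πb` is `∑_{s,a} PS0(s) πb(a|s) ∫ · dP_R(·|s,a)`. -/
theorem contextual_bandit_dr_variance
    {S A : Type} [Fintype S] [Fintype A]
    (PS0 : S → ℝ) (PR : S → A → Measure ℝ)
    [∀ s a, IsProbabilityMeasure (PR s a)]
    (μ σR2 : S → A → ℝ)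
    (hμ : ∀ s a, μ s a = ∫ x, x ∂(PR s a))
    (hσ : ∀ s a, σR2 s a = ∫ x, (x - μ s a) ^ 2 ∂(PR s a))
    (hInt : ∀ s a, MeasureTheory.Integrable (fun x : ℝ => x) (PR s a))
    (hInt2 : ∀ s a, MeasureTheory.Integrable (fun x : ℝ => x ^ 2) (PR s a))
    (πb πe : S → A → ℝ)
    (hPS0 : IsInitDist PS0)
    (hπb : IsPolicy πb) (hπe : IsPolicy πe)
    (hpos : ∀ s a, 0 < πb s a)
    (V : ℝ) (hV : V = ∑ s, PS0 s * ∑ a, πe s a * μ s a) :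
    ∑ s, ∑ a, PS0 s * πb s a *
        ∫ r, (πe s a / πb s a * (r - μ s a) + (∑ a', πe s a' * μ s a') - V) ^ 2 ∂(PR s a)
      = ∑ s, PS0 s *
          (∑ a, (πe s a) ^ 2 / πb s a * σR2 s a
            + ((∑ a, πe s a * μ s a) - V) ^ 2) := by
  have key : ∀ s a,
      ∫ r, (πe s a / πb s a * (r - μ s a) + (∑ a', πe s a' * μ s a') - V) ^ 2 ∂(PR s a)
      = (πe s a / πb s a) ^ 2 * σR2 s a + ((∑ a', πe s a' * μ s a') - V) ^ 2 := by
    intro s a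
    have heq : (fun r : ℝ => (πe s a / πb s a * (r - μ s a) + (∑ a', πe s a' * μ s a') - V) ^ 2)
        = fun r : ℝ => (πe s a / πb s a * (r - μ s a) + ((∑ a', πe s a' * μ s a') - V)) ^ 2 := by
      funext r; ring
    rw [heq, sq_integral (PR s a) (μ s a) _ _ (hμ s a) (hInt s a) (hInt2 s a), hσ s a]
  refine Finset.sum_congr rfl fun s _ => ?_
  have hsum : ∑ a, πb s a = 1 := (hπb s).2
  calc ∑ a, PS0 s * πb s a *
        ∫ r, (πe s a / πb s a * (r - μ s a) + (∑ a', πe s a' * μ s a') - V) ^ 2 ∂(PR s a)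
      = ∑ a, PS0 s * (πb s a *
          ((πe s a / πb s a) ^ 2 * σR2 s a + ((∑ a', πe s a' * μ s a') - V) ^ 2)) := by
        refine Finset.sum_congr rfl fun a _ => ?_
        rw [key s a]; ring
    _ = PS0 s * ∑ a, (πb s a * ((πe s a / πb s a) ^ 2 * σR2 s a)
          + πb s a * ((∑ a', πe s a' * μ s a') - V) ^ 2) := by
        rw [← Finset.mul_sum]
        refine congrArg _ (Finset.sum_congr rfl fun a _ => by ring)
    _ = PS0 s * (∑ a, (πe s a) ^ 2 / πb s a * σR2 s a
          + ((∑ a, πe s a * μ s a) - V) ^ 2) := by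
        congr 1
        rw [Finset.sum_add_distrib, ← Finset.sum_mul, hsum, one_mul]
        congr 1
        refine Finset.sum_congr rfl fun a _ => ?_
        have hb := (hpos s a).ne'
        field_simp
end
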